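/- arXiv:0712.1228 — 6 statements merged into one kernel-verified Lean document; each statement's English description precedes it below -/
import Mathlib

section
/- Let P ⊆ R be partial orders on {1,2,…,n} (each a subrelation of the usual order), giving pattern groups U_P ⊆ U_R over F_q. Let R/P denote the set of pairs (i,j) with i <_R j but not i <_P j, and set I = {u ∈ U_R : u_{ij} ≠ 0 for i ≠ j implies (i,j) ∈ R/P}. Then I is a complete set of left coset representatives for U_R/U_P and also a complete set of right coset representatives for U_P\U_R; in particular every u ∈ U_R is uniquely of the form u = hl with h ∈ U_P, l ∈ I, and uniquely of the form u = l'h' with l' ∈ I, h' ∈ U_P. -/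
/-!
STATEMENT 0: Let P ⊆ R be partial orders on {1,…,n} (subrelations of the usual order),
giving pattern groups U_P ⊆ U_R over F_q.  With
I = {u ∈ U_R : u_{ij} ≠ 0 for i ≠ j implies i <_R j and ¬(i <_P j)},
every u ∈ U_R is uniquely of the form u = h·l with h ∈ U_P, l ∈ I (right coset
representatives for U_P\U_R), and uniquely of the form u = l'·h' with l' ∈ I, h' ∈ U_P
(left coset representatives for U_R/U_P).
-/

open scoped Classical

noncomputable section

open Classical in
/-- Auxiliary recursive construction of the two factors. -/
noncomputable def ent {n : ℕ} {F : Type*} [Field F] (Q : Fin n → Fin n → Prop)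
    (u : Matrix (Fin n) (Fin n) F) (i j : Fin n) : F × F :=
  if hij : i < j then
    let r := u i j - ∑ k ∈ (Finset.Ioo i j).attach,
      (ent Q u i k.1).1 * (ent Q u k.1 j).2
    if Q i j then (r, 0) else (0, r)
  else if i = j then (1, 1) else (0, 0)
termination_by j.val - i.val
decreasing_by
  all_goals
    have hk := k.2
    simp only [Finset.mem_Ioo, Fin.lt_def] at hk hij
    omega

def resid {n : ℕ} {F : Type*} [Field F] (Q : Fin n → Fin n → Prop)
    (u : Matrix (Fin n) (Fin n) F) (i j : Fin n) : F :=
  u i j - ∑ k ∈ Finset.Ioo i j, (ent Q u i k).1 * (ent Q u k j).2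

lemma ent_of_lt {n : ℕ} {F : Type*} [Field F] {Q : Fin n → Fin n → Prop}
    {u : Matrix (Fin n) (Fin n) F} {i j : Fin n} (hij : i < j) :
    ent Q u i j = if Q i j then (resid Q u i j, 0) else (0, resid Q u i j) := by
  rw [ent.eq_def, dif_pos hij]
  rw [Finset.sum_attach (Finset.Ioo i j) (fun k => (ent Q u i k).1 * (ent Q u k j).2)]
  rfl

lemma ent_of_not_lt {n : ℕ} {F : Type*} [Field F] {Q : Fin n → Fin n → Prop}
    {u : Matrix (Fin n) (Fin n) F} {i j : Fin n} (hij : ¬ i < j) :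
    ent Q u i j = if i = j then (1, 1) else (0, 0) := by
  rw [ent.eq_def, dif_neg hij]

lemma ent_diag {n : ℕ} {F : Type*} [Field F] {Q : Fin n → Fin n → Prop}
    {u : Matrix (Fin n) (Fin n) F} (i : Fin n) : ent Q u i i = (1, 1) := by
  rw [ent_of_not_lt (lt_irrefl i), if_pos rfl]

lemma ent_fst {n : ℕ} {F : Type*} [Field F] {Q : Fin n → Fin n → Prop}
    {u : Matrix (Fin n) (Fin n) F} {i j : Fin n} (hne : i ≠ j)
    (h : (ent Q u i j).1 ≠ 0) : Q i j ∧ i < j := by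
  by_cases hij : i < j
  · rw [ent_of_lt hij] at h
    by_cases hQ : Q i j
    · exact ⟨hQ, hij⟩
    · rw [if_neg hQ] at h; simp at h
  · rw [ent_of_not_lt hij, if_neg hne] at h; simp at h

lemma ent_snd {n : ℕ} {F : Type*} [Field F] {Q : Fin n → Fin n → Prop}
    {u : Matrix (Fin n) (Fin n) F} {i j : Fin n} (hne : i ≠ j)
    (h : (ent Q u i j).2 ≠ 0) : ¬ Q i j ∧ i < j := by
  by_cases hij : i < j
  · rw [ent_of_lt hij] at h
    by_cases hQ : Q i j
    · rw [if_pos hQ] at h; simp at h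
    · exact ⟨hQ, hij⟩
  · rw [ent_of_not_lt hij, if_neg hne] at h; simp at h

/-- Expansion of a product of two upper unitriangular matrices. -/
lemma tri_mul {n : ℕ} {F : Type*} [Field F] {a b : Matrix (Fin n) (Fin n) F}
    (ha : ∀ i j, i ≠ j → a i j ≠ 0 → i < j) (hb : ∀ i j, i ≠ j → b i j ≠ 0 → i < j)
    (ha1 : ∀ i, a i i = 1) (hb1 : ∀ i, b i i = 1) {i j : Fin n} (hij : i < j) :
    (a * b) i j = a i j + b i j + ∑ k ∈ Finset.Ioo i j, a i k * b k j := by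
  rw [Matrix.mul_apply]
  rw [← Finset.sum_subset (Finset.subset_univ (Finset.Icc i j))]
  · have hicc : Finset.Icc i j = insert i (insert j (Finset.Ioo i j)) := by
      ext k
      simp only [Finset.mem_Icc, Finset.mem_insert, Finset.mem_Ioo, Fin.lt_def, Fin.le_def,
        Fin.ext_iff]
      have := hij
      rw [Fin.lt_def] at this
      omega
    have hinotin : i ∉ insert j (Finset.Ioo i j) := by
      simp only [Finset.mem_insert, Finset.mem_Ioo]
      push_neg
      exact ⟨Fin.ne_of_lt hij, fun h => absurd h (lt_irrefl i)⟩
    have hjnotin : j ∉ Finset.Ioo i j := by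
      simp [Finset.mem_Ioo]
    rw [hicc, Finset.sum_insert hinotin, Finset.sum_insert hjnotin, ha1, hb1]
    ring
  · intro k _ hk
    simp only [Finset.mem_Icc, not_and_or] at hk
    rcases hk with hk | hk
    · have : a i k = 0 := by
        by_contra h
        rcases eq_or_ne i k with rfl | hne
        · exact hk le_rfl
        · exact hk (le_of_lt (ha _ _ hne h))
      rw [this, zero_mul]
    · have : b k j = 0 := by
        by_contra h
        rcases eq_or_ne k j with rfl | hne
        · exact hk le_rfl
        · exact hk (le_of_lt (hb _ _ hne h))
      rw [this, mul_zero]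

/-- Every nonzero entry of either factor lies in `R`. -/
lemma ent_R {n : ℕ} {F : Type*} [Field F] {Q R : Fin n → Fin n → Prop}
    {u : Matrix (Fin n) (Fin n) F}
    (huR : ∀ i j, i ≠ j → u i j ≠ 0 → R i j)
    (hRt : ∀ i j k, R i j → R j k → R i k) :
    ∀ d : ℕ, ∀ i j : Fin n, j.val - i.val ≤ d → i ≠ j → ent Q u i j ≠ (0, 0) → R i j := by
  intro d
  induction d with
  | zero =>
    intro i j hd hne h0
    have hlt : ¬ i < j := by rw [Fin.lt_def]; omega
    rw [ent_of_not_lt hlt, if_neg hne] at h0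
    exact absurd rfl h0
  | succ d ih =>
    intro i j hd hne h0
    by_cases hlt : i < j
    · rw [ent_of_lt hlt] at h0
      have hr : resid Q u i j ≠ 0 := by
        intro hr
        apply h0
        split_ifs <;> simp [hr]
      by_contra hnR
      apply hr
      have hu0 : u i j = 0 := by
        by_contra h
        exact hnR (huR _ _ hne h)
      rw [resid, hu0, zero_sub, neg_eq_zero]
      apply Finset.sum_eq_zero
      intro k hk
      rw [Finset.mem_Ioo] at hk
      by_cases h1 : (ent Q u i k).1 = 0
      · rw [h1, zero_mul]
      by_cases h2 : (ent Q u k j).2 = 0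
      · rw [h2, mul_zero]
      exfalso
      have hd1 : k.val - i.val ≤ d := by
        have h3 := hk.1; have h4 := hk.2
        rw [Fin.lt_def] at h3 h4 hlt
        omega
      have hd2 : j.val - k.val ≤ d := by
        have h3 := hk.1; have h4 := hk.2
        rw [Fin.lt_def] at h3 h4 hlt
        omega
      have hRik : R i k := ih i k hd1 (Fin.ne_of_lt hk.1)
        (by intro he; rw [he] at h1; exact h1 rfl)
      have hRkj : R k j := ih k j hd2 (Fin.ne_of_lt hk.2)
        (by intro he; rw [he] at h2; exact h2 rfl)
      exact hnR (hRt _ _ _ hRik hRkj)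
    · rw [ent_of_not_lt hlt, if_neg hne] at h0
      exact absurd rfl h0

/-- The product of the two factors recovers `u`. -/
lemma ent_mul {n : ℕ} {F : Type*} [Field F] {Q : Fin n → Fin n → Prop}
    {u : Matrix (Fin n) (Fin n) F}
    (hu1 : ∀ i, u i i = 1) (husupp : ∀ i j, i ≠ j → u i j ≠ 0 → i < j) :
    (Matrix.of fun i j => (ent Q u i j).1) * (Matrix.of fun i j => (ent Q u i j).2) = u := by
  set a : Matrix (Fin n) (Fin n) F := Matrix.of fun i j => (ent Q u i j).1 with ha_def
  set b : Matrix (Fin n) (Fin n) F := Matrix.of fun i j => (ent Q u i j).2 with hb_def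
  have ha : ∀ i j, i ≠ j → a i j ≠ 0 → i < j := fun i j hne h => (ent_fst hne h).2
  have hb : ∀ i j, i ≠ j → b i j ≠ 0 → i < j := fun i j hne h => (ent_snd hne h).2
  have ha1 : ∀ i, a i i = 1 := fun i => by simp [ha_def, ent_diag]
  have hb1 : ∀ i, b i i = 1 := fun i => by simp [hb_def, ent_diag]
  ext i j
  rcases lt_trichotomy i j with hij | rfl | hij
  · rw [tri_mul ha hb ha1 hb1 hij]
    have hab : a i j + b i j = resid Q u i j := by
      show (ent Q u i j).1 + (ent Q u i j).2 = _
      rw [ent_of_lt hij]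
      split_ifs <;> simp
    have hsum : ∑ k ∈ Finset.Ioo i j, a i k * b k j
        = ∑ k ∈ Finset.Ioo i j, (ent Q u i k).1 * (ent Q u k j).2 := rfl
    rw [hab, hsum, resid]
    ring
  · rw [Matrix.mul_apply, Finset.sum_eq_single i]
    · rw [ha1, hb1, one_mul]
      exact (hu1 i).symm
    · intro k _ hk
      by_cases h1 : a i k = 0
      · rw [h1, zero_mul]
      by_cases h2 : b k i = 0
      · rw [h2, mul_zero]
      exact absurd (lt_trans (ha _ _ (Ne.symm hk) h1) (hb _ _ hk h2)) (lt_irrefl i)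
    · intro h; exact absurd (Finset.mem_univ i) h
  · rw [Matrix.mul_apply]
    have hu0 : u i j = 0 := by
      by_contra h
      exact absurd (lt_trans hij (husupp _ _ (Fin.ne_of_gt hij) h)) (lt_irrefl j)
    rw [hu0]
    apply Finset.sum_eq_zero
    intro k _
    by_cases h1 : a i k = 0
    · rw [h1, zero_mul]
    by_cases h2 : b k j = 0
    · rw [h2, mul_zero]
    exfalso
    have hik : i ≤ k := by
      rcases eq_or_ne i k with heq | hne
      · exact le_of_eq heq
      · exact le_of_lt (ha _ _ hne h1)
    have hkj : k ≤ j := by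
      rcases eq_or_ne k j with heq | hne
      · exact le_of_eq heq
      · exact le_of_lt (hb _ _ hne h2)
    exact (not_lt_of_ge (le_trans hik hkj)) hij

/-- Uniqueness: any factorization agrees with `ent`. -/
lemma eq_ent {n : ℕ} {F : Type*} [Field F] {Q : Fin n → Fin n → Prop}
    {u a b : Matrix (Fin n) (Fin n) F}
    (ha1 : ∀ i, a i i = 1) (haQ : ∀ i j, i ≠ j → a i j ≠ 0 → Q i j ∧ i < j)
    (hb1 : ∀ i, b i i = 1) (hbQ : ∀ i j, i ≠ j → b i j ≠ 0 → ¬ Q i j ∧ i < j)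
    (hab : a * b = u) :
    ∀ d : ℕ, ∀ i j : Fin n, j.val - i.val ≤ d →
      a i j = (ent Q u i j).1 ∧ b i j = (ent Q u i j).2 := by
  have ha : ∀ i j, i ≠ j → a i j ≠ 0 → i < j := fun i j hne h => (haQ i j hne h).2
  have hb : ∀ i j, i ≠ j → b i j ≠ 0 → i < j := fun i j hne h => (hbQ i j hne h).2
  have notlt : ∀ i j : Fin n, ¬ i < j →
      a i j = (ent Q u i j).1 ∧ b i j = (ent Q u i j).2 := by
    intro i j hlt
    rcases eq_or_ne i j with rfl | hne
    · rw [ent_diag]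
      exact ⟨ha1 i, hb1 i⟩
    · rw [ent_of_not_lt hlt, if_neg hne]
      have h1 : a i j = 0 := by
        by_contra h
        exact hlt (ha _ _ hne h)
      have h2 : b i j = 0 := by
        by_contra h
        exact hlt (hb _ _ hne h)
      exact ⟨h1, h2⟩
  intro d
  induction d with
  | zero =>
    intro i j hd
    exact notlt i j (by rw [Fin.lt_def]; omega)
  | succ d ih =>
    intro i j hd
    by_cases hlt : i < j
    · have key := tri_mul ha hb ha1 hb1 hlt
      rw [hab] at key
      have hsum : ∑ k ∈ Finset.Ioo i j, a i k * b k j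
          = ∑ k ∈ Finset.Ioo i j, (ent Q u i k).1 * (ent Q u k j).2 := by
        apply Finset.sum_congr rfl
        intro k hk
        rw [Finset.mem_Ioo] at hk
        have h3 := hk.1; have h4 := hk.2
        rw [Fin.lt_def] at h3 h4
        have hlt' := hlt; rw [Fin.lt_def] at hlt'
        rw [(ih i k (by omega)).1, (ih k j (by omega)).2]
      rw [hsum] at key
      have hres : a i j + b i j = resid Q u i j := by
        rw [resid, key]
        ring
      rw [ent_of_lt hlt]
      by_cases hQ : Q i j
      · rw [if_pos hQ]
        have hb0 : b i j = 0 := by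
          by_contra h
          exact (hbQ _ _ (Fin.ne_of_lt hlt) h).1 hQ
        rw [hb0, add_zero] at hres
        exact ⟨hres, hb0⟩
      · rw [if_neg hQ]
        have ha0 : a i j = 0 := by
          by_contra h
          exact hQ (haQ _ _ (Fin.ne_of_lt hlt) h).1
        rw [ha0, zero_add] at hres
        exact ⟨ha0, hres⟩
    · exact notlt i j hlt


/-- A strict partial order on `{1,…,n}` that is a subrelation of the usual order. -/
def IsPatternOrder {n : ℕ} (P : Fin n → Fin n → Prop) : Prop :=
  (∀ i j, P i j → i < j) ∧ ∀ i j k, P i j → P j k → P i k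

/-- The pattern group `U_P` of unipotent upper-triangular matrices supported on `P`. -/
def patternGroup (F : Type*) [Field F] {n : ℕ} (P : Fin n → Fin n → Prop) :
    Set (Matrix (Fin n) (Fin n) F) :=
  {u | (∀ i, u i i = 1) ∧ ∀ i j, i ≠ j → u i j ≠ 0 → P i j}

/-- The set `I` of matrices supported on the relations of `R` that are not in `P`. -/
def ISet (F : Type*) [Field F] {n : ℕ} (R P : Fin n → Fin n → Prop) :
    Set (Matrix (Fin n) (Fin n) F) :=
  {u | (∀ i, u i i = 1) ∧ ∀ i j, i ≠ j → u i j ≠ 0 → R i j ∧ ¬ P i j}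

theorem superinduction_lemma_2_1_coset_representatives
    {n : ℕ} (F : Type*) [Field F] [Fintype F]
    (P R : Fin n → Fin n → Prop)
    (hP : IsPatternOrder P) (hR : IsPatternOrder R)
    (hPR : ∀ i j, P i j → R i j) :
    (∀ u ∈ patternGroup F R,
      ∃! p : Matrix (Fin n) (Fin n) F × Matrix (Fin n) (Fin n) F,
        p.1 ∈ patternGroup F P ∧ p.2 ∈ ISet F R P ∧ u = p.1 * p.2) ∧
    (∀ u ∈ patternGroup F R,
      ∃! p : Matrix (Fin n) (Fin n) F × Matrix (Fin n) (Fin n) F,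
        p.1 ∈ ISet F R P ∧ p.2 ∈ patternGroup F P ∧ u = p.1 * p.2) := by
  constructor
  · intro u hu
    obtain ⟨hu1, huR⟩ := hu
    have husupp : ∀ i j : Fin n, i ≠ j → u i j ≠ 0 → i < j :=
      fun i j h1 h2 => hR.1 _ _ (huR i j h1 h2)
    refine ⟨(Matrix.of fun i j => (ent P u i j).1, Matrix.of fun i j => (ent P u i j).2),
      ⟨⟨?_, ?_⟩, ⟨?_, ?_⟩, ?_⟩, ?_⟩
    · intro i
      show (ent P u i i).1 = 1
      rw [ent_diag]
    · intro i j hne h0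
      exact (ent_fst hne h0).1
    · intro i
      show (ent P u i i).2 = 1
      rw [ent_diag]
    · intro i j hne h0
      refine ⟨?_, (ent_snd hne h0).1⟩
      exact ent_R huR hR.2 (j.val - i.val) i j le_rfl hne
        (fun he => h0 (by show (ent P u i j).2 = 0; rw [he]))
    · exact (ent_mul hu1 husupp).symm
    · rintro ⟨a, b⟩ ⟨⟨ha1, haP⟩, ⟨hb1, hbI⟩, habu⟩
      have haQ : ∀ i j : Fin n, i ≠ j → a i j ≠ 0 → P i j ∧ i < j :=
        fun i j hne h => ⟨haP i j hne h, hP.1 _ _ (haP i j hne h)⟩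
      have hbQ : ∀ i j : Fin n, i ≠ j → b i j ≠ 0 → ¬ P i j ∧ i < j :=
        fun i j hne h => ⟨(hbI i j hne h).2, hR.1 _ _ (hbI i j hne h).1⟩
      have key := eq_ent ha1 haQ hb1 hbQ habu.symm
      have h1 : a = Matrix.of fun i j => (ent P u i j).1 := by
        ext i j; exact (key (j.val - i.val) i j le_rfl).1
      have h2 : b = Matrix.of fun i j => (ent P u i j).2 := by
        ext i j; exact (key (j.val - i.val) i j le_rfl).2
      exact Prod.ext h1 h2
  · intro u hu
    obtain ⟨hu1, huR⟩ := hu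
    have husupp : ∀ i j : Fin n, i ≠ j → u i j ≠ 0 → i < j :=
      fun i j h1 h2 => hR.1 _ _ (huR i j h1 h2)
    set Q : Fin n → Fin n → Prop := fun i j => ¬ P i j with hQ_def
    refine ⟨(Matrix.of fun i j => (ent Q u i j).1, Matrix.of fun i j => (ent Q u i j).2),
      ⟨⟨?_, ?_⟩, ⟨?_, ?_⟩, ?_⟩, ?_⟩
    · intro i
      show (ent Q u i i).1 = 1
      rw [ent_diag]
    · intro i j hne h0
      refine ⟨?_, (ent_fst hne h0).1⟩
      exact ent_R huR hR.2 (j.val - i.val) i j le_rfl hne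
        (fun he => h0 (by show (ent Q u i j).1 = 0; rw [he]))
    · intro i
      show (ent Q u i i).2 = 1
      rw [ent_diag]
    · intro i j hne h0
      exact not_not.mp (ent_snd hne h0).1
    · exact (ent_mul hu1 husupp).symm
    · rintro ⟨a, b⟩ ⟨⟨ha1, haI⟩, ⟨hb1, hbP⟩, habu⟩
      have haQ : ∀ i j : Fin n, i ≠ j → a i j ≠ 0 → Q i j ∧ i < j :=
        fun i j hne h => ⟨(haI i j hne h).2, hR.1 _ _ (haI i j hne h).1⟩
      have hbQ : ∀ i j : Fin n, i ≠ j → b i j ≠ 0 → ¬ Q i j ∧ i < j :=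
        fun i j hne h => ⟨not_not.mpr (hbP i j hne h), hP.1 _ _ (hbP i j hne h)⟩
      have key := eq_ent ha1 haQ hb1 hbQ habu.symm
      have h1 : a = Matrix.of fun i j => (ent Q u i j).1 := by
        ext i j; exact (key (j.val - i.val) i j le_rfl).1
      have h2 : b = Matrix.of fun i j => (ent Q u i j).2 := by
        ext i j; exact (key (j.val - i.val) i j le_rfl).2
      exact Prod.ext h1 h2
end
end

section
/- Let H ⊆ G be algebra groups over F_q and let χ be a superclass function of H. Then for every g ∈ G, SInd_H^G(χ)(g) = (1/|G|) Σ_{x∈G} Ind_H^G(χ)(x(g−1)+1). -/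
/-!
STATEMENT 2: Let H ⊆ G be algebra groups over F_q and let χ be a superclass function
of H.  Then for every g ∈ G,
  SInd_H^G(χ)(g) = (1/|G|) Σ_{x∈G} Ind_H^G(χ)(x(g−1)+1).
-/

open scoped Classical

noncomputable section

def setFinset {α : Type*} [Fintype α] (S : Set α) : Finset α :=
  Finset.univ.filter (· ∈ S)

/-- The algebra group `1 + J` attached to a nilpotent algebra `J`. -/
def algebraGroup {A : Type*} [Ring A] (J : Set A) : Set A :=
  (fun a => 1 + a) '' J

/-- `χ` is constant on the superclasses of `G`: `u ~ v` iff `v − 1 ∈ G(u−1)G`. -/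
def IsSuperclassFn {A : Type*} [Ring A] (G : Set A) (χ : A → ℂ) : Prop :=
  ∀ u ∈ G, ∀ v ∈ G, (∃ x ∈ G, ∃ y ∈ G, v - 1 = x * (u - 1) * y) → χ u = χ v

/-- Superinduction `SInd_H^G(χ)(g) = (1/(|G||H|)) Σ_{x,y∈G} χ̇(x(g−1)y + 1)`. -/
def SInd {A : Type*} [Ring A] [Fintype A] (G H : Set A) (χ : A → ℂ) (g : A) : ℂ :=
  (((setFinset G).card : ℂ) * ((setFinset H).card : ℂ))⁻¹ *
    ∑ x ∈ setFinset G, ∑ y ∈ setFinset G,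
      if x * (g - 1) * y + 1 ∈ H then χ (x * (g - 1) * y + 1) else 0

/-- Induction `Ind_H^G(χ)(g) = (1/|H|) Σ_{y∈G} χ̇(y⁻¹ g y)`. -/
def Ind {A : Type*} [Ring A] [Fintype A] (G H : Set A) (χ : A → ℂ) (g : A) : ℂ :=
  ((setFinset H).card : ℂ)⁻¹ *
    ∑ y ∈ setFinset G,
      if Ring.inverse y * g * y ∈ H then χ (Ring.inverse y * g * y) else 0

/-!
Substituting `x ↦ y x` in the sum over `x` turns `y⁻¹ (x (g - 1) + 1) y` into
`x (g - 1) y + 1`, so the double sum defining `SInd` is the average over `x` of the conjugation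
sums defining `Ind`. The substitution is legitimate because left multiplication by `y ∈ G` permutes
`G`: `G = 1 + J` is finite, closed under multiplication, and consists of units as `J` is nilpotent.
-/

open Finset

@[simp]
lemma mem_setFinset {α : Type*} [Fintype α] {S : Set α} {a : α} :
    a ∈ setFinset S ↔ a ∈ S := by
  simp [setFinset]

lemma ringInverse_mul_conj_mul_add_one {A : Type*} [Ring A] {y : A} (hy : IsUnit y) (a : A) :
    Ring.inverse y * (y * a + 1) * y = a * y + 1 := by
  rw [mul_add, ← mul_assoc, Ring.inverse_mul_cancel y hy, one_mul, mul_one, add_mul,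
    Ring.inverse_mul_cancel y hy]

section MulClosed

variable {A : Type*} [Ring A] [Fintype A] {G : Set A}

lemma sum_setFinset_comp_mul_left {M : Type*} [AddCommMonoid M]
    (hmul : ∀ u ∈ G, ∀ v ∈ G, u * v ∈ G) {y : A} (hyG : y ∈ G) (hy : IsUnit y) (f : A → M) :
    ∑ x ∈ setFinset G, f (y * x) = ∑ x ∈ setFinset G, f x := by
  have hinj : Set.InjOn (y * ·) (setFinset G) := hy.mul_right_injective.injOn
  have himage : (setFinset G).image (y * ·) = setFinset G := by
    refine eq_of_subset_of_card_le ?_ (card_image_of_injOn hinj).ge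
    simp only [subset_iff, mem_image, mem_setFinset]
    rintro _ ⟨x, hx, rfl⟩
    exact hmul y hyG x hx
  rw [← sum_image hinj, himage]

theorem SInd_eq_inv_card_mul_sum_Ind (hmul : ∀ u ∈ G, ∀ v ∈ G, u * v ∈ G)
    (hunit : ∀ y ∈ G, IsUnit y) (H : Set A) (χ : A → ℂ) (g : A) :
    SInd G H χ g = ((setFinset G).card : ℂ)⁻¹ *
      ∑ x ∈ setFinset G, Ind G H χ (x * (g - 1) + 1) := by
  unfold SInd Ind
  rw [← mul_sum, mul_inv, mul_assoc]
  congr 2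
  rw [sum_comm]
  conv_rhs => rw [sum_comm]
  refine sum_congr rfl fun y hyG => ?_
  rw [mem_setFinset] at hyG
  have hy := hunit y hyG
  conv_rhs => rw [← sum_setFinset_comp_mul_left hmul hyG hy]
  refine sum_congr rfl fun x _ => ?_
  rw [mul_assoc y x, ringInverse_mul_conj_mul_add_one hy]

end MulClosed

section AlgebraGroup

variable {A : Type*} [Ring A]

lemma mem_algebraGroup_iff {J : Set A} {a : A} : a ∈ algebraGroup J ↔ a - 1 ∈ J := by
  constructor
  · rintro ⟨b, hb, rfl⟩
    simpa using hb
  · intro h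
    exact ⟨a - 1, h, add_sub_cancel 1 a⟩

lemma mul_mem_algebraGroup {S : Type*} [SetLike S A] [NonUnitalSubsemiringClass S A] (J : S)
    {u v : A} (hu : u ∈ algebraGroup (J : Set A)) (hv : v ∈ algebraGroup (J : Set A)) :
    u * v ∈ algebraGroup (J : Set A) := by
  rw [mem_algebraGroup_iff] at hu hv ⊢
  have h : u * v - 1 = (u - 1) * (v - 1) + (u - 1) + (v - 1) := by noncomm_ring
  rw [h]
  exact add_mem (add_mem (mul_mem hu hv) hu) hv

lemma isNilpotent_of_mem {J : Set A}
    (hnil : ∃ k : ℕ, ∀ l : List A, (∀ x ∈ l, x ∈ J) → k ≤ l.length → l.prod = 0)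
    {a : A} (ha : a ∈ J) : IsNilpotent a := by
  obtain ⟨k, hk⟩ := hnil
  refine ⟨k, ?_⟩
  simpa [List.prod_replicate] using
    hk (List.replicate k a) (fun x hx => List.eq_of_mem_replicate hx ▸ ha) (by simp)

lemma isUnit_of_mem_algebraGroup {J : Set A}
    (hnil : ∃ k : ℕ, ∀ l : List A, (∀ x ∈ l, x ∈ J) → k ≤ l.length → l.prod = 0)
    {u : A} (hu : u ∈ algebraGroup J) : IsUnit u := by
  obtain ⟨a, ha, rfl⟩ := hu
  exact (isNilpotent_of_mem hnil ha).isUnit_one_add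

end AlgebraGroup

theorem sind_eq_average_of_ind_general
    (F : Type*) [Field F]
    (A : Type*) [Ring A] [Algebra F A] [Fintype A]
    (J J' : NonUnitalSubalgebra F A)
    (hnil : ∃ k : ℕ, ∀ l : List A, (∀ x ∈ l, x ∈ J) → k ≤ l.length → l.prod = 0)
    (χ : A → ℂ) :
    ∀ g ∈ algebraGroup (J : Set A),
      SInd (algebraGroup (J : Set A)) (algebraGroup (J' : Set A)) χ g =
        ((setFinset (algebraGroup (J : Set A))).card : ℂ)⁻¹ *
          ∑ x ∈ setFinset (algebraGroup (J : Set A)),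
            Ind (algebraGroup (J : Set A)) (algebraGroup (J' : Set A)) χ (x * (g - 1) + 1) :=
  fun g _ => SInd_eq_inv_card_mul_sum_Ind (fun _ hu _ hv => mul_mem_algebraGroup J hu hv)
    (fun _ hy => isUnit_of_mem_algebraGroup hnil hy) _ χ g

theorem sind_eq_average_of_ind
    (F : Type*) [Field F] [Fintype F]
    (A : Type*) [Ring A] [Algebra F A] [Fintype A]
    (J J' : NonUnitalSubalgebra F A)
    (hnil : ∃ k : ℕ, ∀ l : List A, (∀ x ∈ l, x ∈ J) → k ≤ l.length → l.prod = 0)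
    (hsub : (J' : Set A) ⊆ (J : Set A))
    (χ : A → ℂ) (hχ : IsSuperclassFn (algebraGroup (J' : Set A)) χ) :
    ∀ g ∈ algebraGroup (J : Set A),
      SInd (algebraGroup (J : Set A)) (algebraGroup (J' : Set A)) χ g =
        ((setFinset (algebraGroup (J : Set A))).card : ℂ)⁻¹ *
          ∑ x ∈ setFinset (algebraGroup (J : Set A)),
            Ind (algebraGroup (J : Set A)) (algebraGroup (J' : Set A)) χ (x * (g - 1) + 1) :=
  sind_eq_average_of_ind_general F A J J' hnil χ
end
end

section
/- Suppose U_P ⊆ U_R are pattern groups on {1,2,…,n} over F_q with U_P normal in U_R. Then x(h−1)y + 1 ∈ U_P for all x, y ∈ U_R and all h ∈ U_P. -/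
/-!
STATEMENT 7: Suppose U_P ⊆ U_R are pattern groups on {1,…,n} over F_q with U_P normal
in U_R.  Then x(h−1)y + 1 ∈ U_P for all x, y ∈ U_R and all h ∈ U_P.
-/
open scoped Classical

noncomputable section

/-! Conjugating the elementary matrix `1 + E_kl ∈ U_P` by `1 + E_ik ∈ U_R` creates a nonzero
`(i, l)` entry, and conjugating it by `1 + E_lj ∈ U_R` a nonzero `(k, j)` entry; so normality
forces `R ∘ P ⊆ P` and `P ∘ R ⊆ P`. The support of a matrix product lies in the composite of the
supports, hence `x (h - 1) y` is supported on `(= ∪ R) ∘ P ∘ (= ∪ R) ⊆ P`; as `P` is irreflexive,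
this says exactly that `x (h - 1) y + 1 ∈ U_P`. -/

namespace Matrix

variable {m n α : Type*}

def IsSupportedOn [Zero α] (M : Matrix m n α) (Q : m → n → Prop) : Prop :=
  ∀ i j, M i j ≠ 0 → Q i j

theorem IsSupportedOn.mono [Zero α] {M : Matrix m n α} {Q S : m → n → Prop}
    (hM : M.IsSupportedOn Q) (hQS : ∀ i j, Q i j → S i j) : M.IsSupportedOn S :=
  fun i j hij => hQS i j (hM i j hij)

theorem IsSupportedOn.mul {l : Type*} [Fintype m] [NonUnitalNonAssocSemiring α]
    {M : Matrix l m α} {N : Matrix m n α} {Q : l → m → Prop} {S : m → n → Prop}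
    (hM : M.IsSupportedOn Q) (hN : N.IsSupportedOn S) :
    (M * N).IsSupportedOn (Relation.Comp Q S) := by
  intro i j hij
  obtain ⟨k, -, hk⟩ := Finset.exists_ne_zero_of_sum_ne_zero hij
  exact ⟨k, hM i k (left_ne_zero_of_mul hk), hN k j (right_ne_zero_of_mul hk)⟩

variable [DecidableEq n] [Fintype n] [CommRing α]

theorem inv_transvection {i j : n} (hij : i ≠ j) (c : α) :
    (transvection i j c)⁻¹ = transvection i j (-c) :=
  inv_eq_right_inv <| by
    rw [transvection_mul_transvection_same i j hij, add_neg_cancel, transvection_zero]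

theorem transvection_mul_mul_transvection_neg_apply_left {i k l : n} (hlk : l ≠ k) (c : α)
    (M : Matrix n n α) :
    (transvection i k c * M * transvection i k (-c)) i l = M i l + c * M k l := by
  rw [mul_transvection_apply_of_ne _ _ _ _ hlk, transvection_mul_apply_same]

theorem transvection_mul_mul_transvection_neg_apply_right {k l j : n} (hkl : k ≠ l) (c : α)
    (M : Matrix n n α) :
    (transvection l j c * M * transvection l j (-c)) k j = M k j - c * M k l := by
  rw [mul_transvection_apply_same, transvection_mul_apply_of_ne _ _ _ _ hkl,
    transvection_mul_apply_of_ne _ _ _ _ hkl, neg_mul, ← sub_eq_add_neg]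

end Matrix

open Matrix

section PatternGroup

variable {F : Type*} [Field F] {n : ℕ} {P R : Fin n → Fin n → Prop}

theorem transvection_mem_patternGroup {i j : Fin n} (hij : i ≠ j) (hP : P i j) (c : F) :
    transvection i j c ∈ patternGroup F P := by
  refine ⟨fun k => ?_, fun a b hab hne => ?_⟩
  · rw [transvection, Matrix.add_apply, one_apply_eq,
      single_apply_of_ne _ _ _ _ _ (fun h => hij (h.1.trans h.2.symm)), add_zero]
  rw [transvection, Matrix.add_apply, one_apply_ne hab, zero_add] at hne
  obtain ⟨rfl, rfl⟩ := of_not_not (mt (single_apply_of_ne (α := F) i j c a b) hne)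
  exact hP

theorem mem_patternGroup_iff (hP : ∀ i, ¬P i i) {u : Matrix (Fin n) (Fin n) F} :
    u ∈ patternGroup F P ↔ (u - 1).IsSupportedOn P := by
  refine ⟨fun hu i j hij => ?_, fun hu => ⟨fun i => ?_, fun i j hij hne => hu i j ?_⟩⟩
  · obtain rfl | hne := eq_or_ne i j
    · simp [hu.1] at hij
    · exact hu.2 i j hne (by simpa [one_apply_ne hne] using hij)
  · by_contra hi
    exact hP i (hu i i (by simpa [sub_eq_zero] using hi))
  · simpa [one_apply_ne hij] using hne

theorem isSupportedOn_reflGen_of_mem_patternGroup {u : Matrix (Fin n) (Fin n) F}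
    (hu : u ∈ patternGroup F R) : u.IsSupportedOn (Relation.ReflGen R) := by
  intro i j hij
  obtain rfl | hne := eq_or_ne i j
  · exact .refl
  · exact .single (hu.2 i j hne hij)

variable (hP : ∀ i j, P i j → i < j) (hR : ∀ i j, R i j → i < j)
  (hnormal : ∀ x ∈ patternGroup F R, ∀ h ∈ patternGroup F P, x * h * x⁻¹ ∈ patternGroup F P)
include hP hR hnormal

theorem patternOrder_trans_left_of_normal : ∀ ⦃i k l⦄, R i k → P k l → P i l := by
  intro i k l hik hkl
  have hik' := hR i k hik
  have hkl' := hP k l hkl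
  have hconj := hnormal _ (transvection_mem_patternGroup hik'.ne hik (1 : F)) _
    (transvection_mem_patternGroup hkl'.ne hkl 1)
  rw [inv_transvection hik'.ne] at hconj
  refine hconj.2 i l (hik'.trans hkl').ne ?_
  rw [transvection_mul_mul_transvection_neg_apply_left hkl'.ne']
  simp [transvection, hik'.ne', hkl'.ne, (hik'.trans hkl').ne]

theorem patternOrder_trans_right_of_normal : ∀ ⦃k l j⦄, P k l → R l j → P k j := by
  intro k l j hkl hlj
  have hkl' := hP k l hkl
  have hlj' := hR l j hlj
  have hconj := hnormal _ (transvection_mem_patternGroup hlj'.ne hlj (1 : F)) _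
    (transvection_mem_patternGroup hkl'.ne hkl 1)
  rw [inv_transvection hlj'.ne] at hconj
  refine hconj.2 k j (hkl'.trans hlj').ne ?_
  rw [transvection_mul_mul_transvection_neg_apply_right hkl'.ne]
  simp [transvection, hkl'.ne, hlj'.ne, (hkl'.trans hlj').ne]

end PatternGroup

theorem normal_pattern_subgroup_two_sided_stability_general
    {n : ℕ} (F : Type*) [Field F]
    (P R : Fin n → Fin n → Prop)
    (hP : IsPatternOrder P) (hR : IsPatternOrder R)
    (hnormal : ∀ x ∈ patternGroup F R, ∀ h ∈ patternGroup F P,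
      x * h * x⁻¹ ∈ patternGroup F P) :
    ∀ x ∈ patternGroup F R, ∀ y ∈ patternGroup F R, ∀ h ∈ patternGroup F P,
      x * (h - 1) * y + 1 ∈ patternGroup F P := by
  intro x hx y hy h hh
  have hPirr : ∀ i, ¬P i i := fun i hi => (hP.1 i i hi).false
  rw [mem_patternGroup_iff hPirr, add_sub_cancel_right]
  refine ((((isSupportedOn_reflGen_of_mem_patternGroup hx).mul
    ((mem_patternGroup_iff hPirr).1 hh)).mul
    (isSupportedOn_reflGen_of_mem_patternGroup hy))).mono ?_
  have left := patternOrder_trans_left_of_normal hP.1 hR.1 hnormal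
  have right := patternOrder_trans_right_of_normal hP.1 hR.1 hnormal
  rintro i j ⟨l, ⟨k, _ | hik, hkl⟩, _ | hlj⟩
  · exact hkl
  · exact right hkl hlj
  · exact left hik hkl
  · exact right (left hik hkl) hlj

theorem normal_pattern_subgroup_two_sided_stability
    {n : ℕ} (F : Type*) [Field F] [Fintype F]
    (P R : Fin n → Fin n → Prop)
    (hP : IsPatternOrder P) (hR : IsPatternOrder R)
    (hPR : ∀ i j, P i j → R i j)
    (hnormal : ∀ x ∈ patternGroup F R, ∀ h ∈ patternGroup F P,
      x * h * x⁻¹ ∈ patternGroup F P) :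
    ∀ x ∈ patternGroup F R, ∀ y ∈ patternGroup F R, ∀ h ∈ patternGroup F P,
      x * (h - 1) * y + 1 ∈ patternGroup F P :=
  normal_pattern_subgroup_two_sided_stability_general F P R hP hR hnormal
end
end

section
/- Let U_P ⊆ U_R be pattern groups on {1,2,…,n} over F_q, and let I = {u ∈ U_R : u_{ij} ≠ 0 for i ≠ j implies i <_R j and not i <_P j}. If (l−1)(u−1) = 0 (matrix product) for all l ∈ I and u ∈ U_R, then: (a) I is an abelian subgroup of U_R, with lr = 1 + (l−1) + (r−1) and l^{−1} = 1 − (l−1) for l, r ∈ I; and (b) 1 + l(u−1)r = r^{−1} u r for all l, r ∈ I and u ∈ U_R. -/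
/-!
STATEMENT 9: Let U_P ⊆ U_R be pattern groups on {1,…,n} over F_q, and let
I = {u ∈ U_R : u_{ij} ≠ 0 for i ≠ j implies i <_R j and not i <_P j}.
If (l−1)(u−1) = 0 for all l ∈ I and u ∈ U_R, then
(a) I is an abelian subgroup of U_R, with l·r = 1 + (l−1) + (r−1) and
    l⁻¹ = 1 − (l−1) for l, r ∈ I; and
(b) 1 + l(u−1)r = r⁻¹·u·r for all l, r ∈ I and u ∈ U_R.
-/
open scoped Classical

noncomputable section

/-!
Everything reduces to ring identities in `1 + (l - 1)` form: the hypothesis `(l - 1)(u - 1) = 0`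
turns `l * u` into `1 + (l - 1) + (u - 1)`, so on `I` multiplication is addition of the
nilpotent parts `l - 1`, which live in the additive group of matrices supported on
`{(i, j) : i ≠ j, i <_R j, ¬ i <_P j}`. Since `(l - 1)^2 = 0`, also `l⁻¹ = 1 - (l - 1)`, and the
conjugation formula follows by expanding `(1 - (r - 1)) u r`.
-/

section RingIdentities

variable {A : Type*} [Ring A] {a b l r u : A}

theorem mul_eq_one_add_sub_one_add_sub_one (h : (a - 1) * (b - 1) = 0) :
    a * b = 1 + (a - 1) + (b - 1) := by
  have expand : a * b = 1 + (a - 1) + (b - 1) + (a - 1) * (b - 1) := by noncomm_ring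
  rw [expand, h, add_zero]

theorem mul_one_sub_sub_one_eq_one (h : (a - 1) * (a - 1) = 0) : a * (1 - (a - 1)) = 1 := by
  have h' : (a - 1) * (1 - (a - 1) - 1) = 0 := by
    rw [sub_sub_cancel_left, mul_neg, h, neg_zero]
  rw [mul_eq_one_add_sub_one_add_sub_one h', sub_sub_cancel_left, add_neg_cancel_right]

theorem one_add_mul_sub_one_mul_eq (hl : (l - 1) * (u - 1) = 0) (hr : (r - 1) * (u - 1) = 0)
    (hrr : (r - 1) * (r - 1) = 0) : 1 + l * (u - 1) * r = (1 - (r - 1)) * u * r := by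
  have hlu : l * (u - 1) = u - 1 := by
    have expand : l * (u - 1) = (u - 1) + (l - 1) * (u - 1) := by noncomm_ring
    rw [expand, hl, add_zero]
  have expand : (1 - (r - 1)) * u * r
      = 1 + (u - 1) * r - (r - 1) * (u - 1) * r - (r - 1) * (r - 1) := by noncomm_ring
  rw [hlu, expand, hr, hrr, zero_mul, sub_zero, sub_zero]

end RingIdentities

theorem Matrix.inv_eq_one_sub_sub_one {m K : Type*} [Fintype m] [DecidableEq m] [CommRing K]
    {M : Matrix m m K} (h : (M - 1) * (M - 1) = 0) : M⁻¹ = 1 - (M - 1) :=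
  Matrix.inv_eq_right_inv (mul_one_sub_sub_one_eq_one h)

def matrixSupportedOn (α : Type*) [AddGroup α] {m n : Type*} (Q : m → n → Prop) :
    AddSubgroup (Matrix m n α) where
  carrier := {M | ∀ i j, M i j ≠ 0 → Q i j}
  zero_mem' _ _ h := absurd rfl h
  add_mem' {M N} hM hN i j h := by
    by_cases hMij : M i j = 0
    · exact hN i j fun hNij => h (by rw [Matrix.add_apply, hMij, hNij, add_zero])
    · exact hM i j hMij
  neg_mem' hM i j h := hM i j fun hMij => h (by rw [Matrix.neg_apply, hMij, neg_zero])

theorem mem_ISet_iff {F : Type*} [Field F] {n : ℕ} {R P : Fin n → Fin n → Prop}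
    {u : Matrix (Fin n) (Fin n) F} :
    u ∈ ISet F R P ↔ u - 1 ∈ matrixSupportedOn F (fun i j => i ≠ j ∧ R i j ∧ ¬ P i j) := by
  have offDiag {i j : Fin n} (hij : i ≠ j) : (u - 1) i j = u i j := by
    rw [Matrix.sub_apply, Matrix.one_apply_ne hij, sub_zero]
  constructor
  · rintro ⟨hdiag, hoff⟩ i j hne
    have hij : i ≠ j := by
      rintro rfl
      exact hne (by rw [Matrix.sub_apply, hdiag, Matrix.one_apply_eq, sub_self])
    exact ⟨hij, hoff i j hij (offDiag hij ▸ hne)⟩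
  · intro hu
    refine ⟨fun i => ?_, fun i j hij hne => (hu i j (offDiag hij ▸ hne)).2⟩
    by_contra hii
    refine (hu i i fun h => hii ?_).1 rfl
    rwa [Matrix.sub_apply, Matrix.one_apply_eq, sub_eq_zero] at h

theorem ISet_subset_patternGroup {F : Type*} [Field F] {n : ℕ} {R P : Fin n → Fin n → Prop} :
    ISet F R P ⊆ patternGroup F R :=
  fun _ hu => ⟨hu.1, fun i j hij hne => (hu.2 i j hij hne).1⟩

theorem ISet_abelian_subgroup_and_conjugation_formula_general
    {n : ℕ} (F : Type*) [Field F]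
    (P R : Fin n → Fin n → Prop)
    (hzero : ∀ l ∈ ISet F R P, ∀ u ∈ patternGroup F R, (l - 1) * (u - 1) = 0) :
    -- (a) `I` is an abelian subgroup of `U_R`:
    (ISet F R P ⊆ patternGroup F R) ∧
    ((1 : Matrix (Fin n) (Fin n) F) ∈ ISet F R P) ∧
    (∀ l ∈ ISet F R P, ∀ r ∈ ISet F R P,
      l * r ∈ ISet F R P ∧ l * r = 1 + (l - 1) + (r - 1) ∧ l * r = r * l) ∧
    (∀ l ∈ ISet F R P, (1 - (l - 1) ∈ ISet F R P) ∧ l⁻¹ = 1 - (l - 1)) ∧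
    -- (b) the conjugation formula:
    (∀ l ∈ ISet F R P, ∀ r ∈ ISet F R P, ∀ u ∈ patternGroup F R,
      1 + l * (u - 1) * r = r⁻¹ * u * r) := by
  have hzeroI (l r) (hl : l ∈ ISet F R P) (hr : r ∈ ISet F R P) : (l - 1) * (r - 1) = 0 :=
    hzero l hl r (ISet_subset_patternGroup hr)
  have hinv {l} (hl : l ∈ ISet F R P) : l⁻¹ = 1 - (l - 1) :=
    Matrix.inv_eq_one_sub_sub_one (hzeroI l l hl hl)
  refine ⟨ISet_subset_patternGroup, ?_, fun l hl r hr => ⟨?_, ?_, ?_⟩,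
    fun l hl => ⟨?_, hinv hl⟩, fun l hl r hr u hu => ?_⟩
  · rw [mem_ISet_iff, sub_self]
    exact zero_mem _
  · rw [mem_ISet_iff, mul_eq_one_add_sub_one_add_sub_one (hzeroI l r hl hr), add_assoc,
      add_sub_cancel_left]
    exact add_mem (mem_ISet_iff.mp hl) (mem_ISet_iff.mp hr)
  · exact mul_eq_one_add_sub_one_add_sub_one (hzeroI l r hl hr)
  · rw [mul_eq_one_add_sub_one_add_sub_one (hzeroI l r hl hr),
      mul_eq_one_add_sub_one_add_sub_one (hzeroI r l hr hl), add_right_comm]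
  · rw [mem_ISet_iff, sub_sub_cancel_left]
    exact neg_mem (mem_ISet_iff.mp hl)
  · rw [hinv hr]
    exact one_add_mul_sub_one_mul_eq (hzero l hl u hu) (hzero r hr u hu) (hzeroI r r hr hr)

theorem ISet_abelian_subgroup_and_conjugation_formula
    {n : ℕ} (F : Type*) [Field F] [Fintype F]
    (P R : Fin n → Fin n → Prop)
    (hP : IsPatternOrder P) (hR : IsPatternOrder R)
    (hPR : ∀ i j, P i j → R i j)
    (hzero : ∀ l ∈ ISet F R P, ∀ u ∈ patternGroup F R, (l - 1) * (u - 1) = 0) :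
    -- (a) `I` is an abelian subgroup of `U_R`:
    (ISet F R P ⊆ patternGroup F R) ∧
    ((1 : Matrix (Fin n) (Fin n) F) ∈ ISet F R P) ∧
    (∀ l ∈ ISet F R P, ∀ r ∈ ISet F R P,
      l * r ∈ ISet F R P ∧ l * r = 1 + (l - 1) + (r - 1) ∧ l * r = r * l) ∧
    (∀ l ∈ ISet F R P, (1 - (l - 1) ∈ ISet F R P) ∧ l⁻¹ = 1 - (l - 1)) ∧
    -- (b) the conjugation formula:
    (∀ l ∈ ISet F R P, ∀ r ∈ ISet F R P, ∀ u ∈ patternGroup F R,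
      1 + l * (u - 1) * r = r⁻¹ * u * r) :=
  ISet_abelian_subgroup_and_conjugation_formula_general F P R hzero
end
end

section
/- Fix 1 ≤ m ≤ n and embed U_m in U_n as the pattern subgroup U_m = {u ∈ U_n : u_{ij} ≠ 0 for i ≠ j implies i < j ≤ m}. Then SInd_{U_m}^{U_n}(χ) = Ind_{U_m}^{U_n}(χ) for every superclass function χ of U_m. -/
/-!
STATEMENT 10: Fix 1 ≤ m ≤ n and embed U_m in U_n as the pattern subgroup
U_m = {u ∈ U_n : u_{ij} ≠ 0 for i ≠ j implies i < j ≤ m}.  Then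
SInd_{U_m}^{U_n}(χ) = Ind_{U_m}^{U_n}(χ) for every superclass function χ of U_m.
(Indices here are 0-based: the 1-based condition j ≤ m reads (j:ℕ)+1 ≤ m.)
-/
open scoped Classical

noncomputable section

/-- `U_m` embedded in `U_n` (0-based indices: 1-based `i < j ≤ m`). -/
def UmSub (F : Type*) [Field F] (n m : ℕ) : Set (Matrix (Fin n) (Fin n) F) :=
  {u | (∀ i, u i i = 1) ∧ ∀ i j, i ≠ j → u i j ≠ 0 → i < j ∧ (j : ℕ) + 1 ≤ m}

/-!
For `y ∈ U_n` we have `x (g - 1) y = (x y) · y⁻¹ (g - 1) y`, so it suffices that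
`χ̇ (w a + 1) = χ̇ (a + 1)` for every `w ∈ U_n`. If `a + 1 ∈ U_m`, the matrix `a` vanishes outside
its first `m` rows, so `w a = w' a` where `w' ∈ U_m` keeps the first `m` columns of `w`; hence
`w a + 1 ∈ U_m` lies in the superclass of `a + 1`. Applied to `w⁻¹`, the same fact shows that
`w a + 1 ∈ U_m` forces `a + 1 ∈ U_m`. So every summand of `SInd` equals the summand of `Ind` at `y`,
and the sum over `x` cancels the factor `|U_n|`.
-/

section PatternAlgebra

variable {n : ℕ}

def patternAlgebra (R : Type*) [Zero R] (P : Fin n → Fin n → Prop) :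
    Set (Matrix (Fin n) (Fin n) R) :=
  {a | ∀ i j, a i j ≠ 0 → P i j}

variable {R : Type*}

theorem add_mem_patternAlgebra [AddZeroClass R] {P : Fin n → Fin n → Prop}
    {a b : Matrix (Fin n) (Fin n) R} (ha : a ∈ patternAlgebra R P)
    (hb : b ∈ patternAlgebra R P) : a + b ∈ patternAlgebra R P := by
  intro i j hab
  by_cases hai : a i j = 0
  · exact hb i j (by simpa [hai] using hab)
  · exact ha i j hai

theorem mul_mem_patternAlgebra [NonUnitalNonAssocSemiring R] {P : Fin n → Fin n → Prop}
    (hP : ∀ i j k, P i j → P j k → P i k) {a b : Matrix (Fin n) (Fin n) R}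
    (ha : a ∈ patternAlgebra R P) (hb : b ∈ patternAlgebra R P) :
    a * b ∈ patternAlgebra R P := by
  intro i k hab
  rw [Matrix.mul_apply] at hab
  obtain ⟨j, -, hj⟩ := Finset.exists_ne_zero_of_sum_ne_zero hab
  exact hP i j k (ha i j (left_ne_zero_of_mul hj)) (hb j k (right_ne_zero_of_mul hj))

theorem mem_patternGroup_iff_sub_one_mem {F : Type*} [Field F] {P : Fin n → Fin n → Prop}
    (hP : ∀ i, ¬ P i i) {u : Matrix (Fin n) (Fin n) F} :
    u ∈ patternGroup F P ↔ u - 1 ∈ patternAlgebra F P := by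
  constructor
  · rintro ⟨hdiag, hoff⟩ i j hij
    rcases eq_or_ne i j with rfl | hne
    · simp [hdiag] at hij
    · exact hoff i j hne (by simpa [Matrix.one_apply_ne hne] using hij)
  · intro hu
    refine ⟨fun i => ?_, fun i j hne hij => hu i j (by simpa [Matrix.one_apply_ne hne] using hij)⟩
    by_contra hi
    exact hP i (hu i i (by simpa [sub_eq_zero] using hi))

theorem one_mem_patternGroup {F : Type*} [Field F] (P : Fin n → Fin n → Prop) :
    (1 : Matrix (Fin n) (Fin n) F) ∈ patternGroup F P :=
  ⟨Matrix.one_apply_eq, fun _ _ hne h => absurd (Matrix.one_apply_ne hne) h⟩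

end PatternAlgebra

section Unitriangular

variable {F : Type*} [Field F] {n : ℕ}

theorem mem_patternGroup_lt_iff {u : Matrix (Fin n) (Fin n) F} :
    u ∈ patternGroup F (fun i j : Fin n => i < j) ↔ u.IsUpperTriangular ∧ ∀ i, u i i = 1 := by
  refine ⟨fun ⟨hdiag, hoff⟩ => ⟨fun i j hji => ?_, hdiag⟩,
    fun ⟨hupper, hdiag⟩ => ⟨hdiag, fun i j hne hij => ?_⟩⟩
  · by_contra h
    exact lt_asymm hji (hoff i j hji.ne' h)
  · by_contra h
    exact hij (hupper ((not_lt.mp h).lt_of_ne hne.symm))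

theorem Matrix.IsUpperTriangular.mul_apply_self {ι R : Type*} [Fintype ι] [LinearOrder ι]
    [NonUnitalNonAssocSemiring R] {M N : Matrix ι ι R} (hM : M.IsUpperTriangular)
    (hN : N.IsUpperTriangular) (i : ι) : (M * N) i i = M i i * N i i := by
  rw [Matrix.mul_apply, Finset.sum_eq_single i]
  · intro j _ hji
    rcases hji.lt_or_gt with hlt | hgt
    · rw [hM hlt, zero_mul]
    · rw [hN hgt, mul_zero]
  · simp

theorem mul_mem_patternGroup_lt {x y : Matrix (Fin n) (Fin n) F}
    (hx : x ∈ patternGroup F (fun i j : Fin n => i < j))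
    (hy : y ∈ patternGroup F (fun i j : Fin n => i < j)) :
    x * y ∈ patternGroup F (fun i j : Fin n => i < j) := by
  rw [mem_patternGroup_lt_iff] at hx hy ⊢
  exact ⟨hx.1.mul hy.1, fun i => by rw [hx.1.mul_apply_self hy.1, hx.2, hy.2, one_mul]⟩

theorem isUnit_of_mem_patternGroup_lt {u : Matrix (Fin n) (Fin n) F}
    (hu : u ∈ patternGroup F (fun i j : Fin n => i < j)) : IsUnit u := by
  rw [mem_patternGroup_lt_iff] at hu
  simp [Matrix.isUnit_iff_isUnit_det, Matrix.det_of_isUpperTriangular hu.1, hu.2]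

theorem ringInverse_mem_patternGroup_lt {u : Matrix (Fin n) (Fin n) F}
    (hu : u ∈ patternGroup F (fun i j : Fin n => i < j)) :
    Ring.inverse u ∈ patternGroup F (fun i j : Fin n => i < j) := by
  have hunit := isUnit_of_mem_patternGroup_lt hu
  let := Matrix.invertibleOfIsUnitDet u ((Matrix.isUnit_iff_isUnit_det u).mp hunit)
  rw [mem_patternGroup_lt_iff] at hu ⊢
  have hinv : (Ring.inverse u).IsUpperTriangular := by
    rw [← Matrix.nonsing_inv_eq_ringInverse]
    exact Matrix.blockTriangular_inv_of_blockTriangular hu.1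
  refine ⟨hinv, fun i => ?_⟩
  have := congrFun (congrFun (Ring.mul_inverse_cancel u hunit) i) i
  rwa [hu.1.mul_apply_self hinv, hu.2, one_mul, Matrix.one_apply_eq] at this

end Unitriangular

section Um

variable {F : Type*} [Field F] {n m : ℕ}

theorem mem_UmSub_iff_sub_one_mem {u : Matrix (Fin n) (Fin n) F} :
    u ∈ UmSub F n m ↔ u - 1 ∈ patternAlgebra F (fun i j : Fin n => i < j ∧ (j : ℕ) + 1 ≤ m) :=
  mem_patternGroup_iff_sub_one_mem fun i h => lt_irrefl i h.1

theorem mul_sub_one_add_one_mem_UmSub {h u : Matrix (Fin n) (Fin n) F}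
    (hh : h ∈ UmSub F n m) (hu : u ∈ UmSub F n m) : h * (u - 1) + 1 ∈ UmSub F n m := by
  rw [mem_UmSub_iff_sub_one_mem] at hh hu ⊢
  rw [add_sub_cancel_right, show h * (u - 1) = (h - 1) * (u - 1) + (u - 1) by noncomm_ring]
  exact add_mem_patternAlgebra
    (mul_mem_patternAlgebra (fun _ _ _ hij hjk => ⟨hij.1.trans hjk.1, hjk.2⟩) hh hu) hu

def leadingColumns (m : ℕ) (w : Matrix (Fin n) (Fin n) F) : Matrix (Fin n) (Fin n) F :=
  Matrix.of fun i j => if (j : ℕ) < m then w i j else (1 : Matrix (Fin n) (Fin n) F) i j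

theorem leadingColumns_mem_UmSub {w : Matrix (Fin n) (Fin n) F}
    (hw : w ∈ patternGroup F (fun i j : Fin n => i < j)) : leadingColumns m w ∈ UmSub F n m := by
  refine ⟨fun i => ?_, fun i j hne hij => ?_⟩
  · by_cases hi : (i : ℕ) < m <;> simp [leadingColumns, hi, hw.1 i]
  · by_cases hj : (j : ℕ) < m
    · simp only [leadingColumns, Matrix.of_apply, if_pos hj] at hij
      exact ⟨hw.2 i j hne hij, hj⟩
    · simp [leadingColumns, hj, Matrix.one_apply_ne hne] at hij

theorem leadingColumns_mul_sub_one (w : Matrix (Fin n) (Fin n) F) {u : Matrix (Fin n) (Fin n) F}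
    (hu : u ∈ UmSub F n m) : leadingColumns m w * (u - 1) = w * (u - 1) := by
  rw [mem_UmSub_iff_sub_one_mem] at hu
  ext i l
  simp only [Matrix.mul_apply]
  refine Finset.sum_congr rfl fun j _ => ?_
  by_cases hj : (j : ℕ) < m
  · simp [leadingColumns, hj]
  · have hjl : (u - 1) j l = 0 := by
      by_contra hjl
      obtain ⟨hjl, hlm⟩ := hu j l hjl
      have : (j : ℕ) < l := hjl
      omega
    simp [hjl]

theorem mul_sub_one_add_one_mem_UmSub_of_mem_patternGroup_lt {w u : Matrix (Fin n) (Fin n) F}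
    (hw : w ∈ patternGroup F (fun i j : Fin n => i < j)) (hu : u ∈ UmSub F n m) :
    w * (u - 1) + 1 ∈ UmSub F n m := by
  rw [← leadingColumns_mul_sub_one w hu]
  exact mul_sub_one_add_one_mem_UmSub (leadingColumns_mem_UmSub hw) hu

theorem IsSuperclassFn.apply_mul_sub_one_add_one {χ : Matrix (Fin n) (Fin n) F → ℂ}
    (hχ : IsSuperclassFn (UmSub F n m) χ) {w u : Matrix (Fin n) (Fin n) F}
    (hw : w ∈ patternGroup F (fun i j : Fin n => i < j)) (hu : u ∈ UmSub F n m) :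
    χ (w * (u - 1) + 1) = χ u := by
  rw [← leadingColumns_mul_sub_one w hu]
  refine (hχ u hu _ (mul_sub_one_add_one_mem_UmSub (leadingColumns_mem_UmSub hw) hu)
    ⟨_, leadingColumns_mem_UmSub hw, 1, one_mem_patternGroup _, ?_⟩).symm
  rw [add_sub_cancel_right, mul_one]

theorem IsSuperclassFn.indicator_mul_add_one {χ : Matrix (Fin n) (Fin n) F → ℂ}
    (hχ : IsSuperclassFn (UmSub F n m) χ) {w : Matrix (Fin n) (Fin n) F}
    (hw : w ∈ patternGroup F (fun i j : Fin n => i < j)) (a : Matrix (Fin n) (Fin n) F) :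
    (UmSub F n m).indicator χ (w * a + 1) = (UmSub F n m).indicator χ (a + 1) := by
  by_cases ha : a + 1 ∈ UmSub F n m
  · have hwa := mul_sub_one_add_one_mem_UmSub_of_mem_patternGroup_lt hw ha
    have hχa := hχ.apply_mul_sub_one_add_one hw ha
    rw [add_sub_cancel_right] at hwa hχa
    rw [Set.indicator_of_mem ha, Set.indicator_of_mem hwa, hχa]
  · have hwa : w * a + 1 ∉ UmSub F n m := fun hwa => ha <| by
      have := mul_sub_one_add_one_mem_UmSub_of_mem_patternGroup_lt
        (ringInverse_mem_patternGroup_lt hw) hwa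
      rwa [add_sub_cancel_right, ← mul_assoc,
        Ring.inverse_mul_cancel w (isUnit_of_mem_patternGroup_lt hw), one_mul] at this
    rw [Set.indicator_of_notMem ha, Set.indicator_of_notMem hwa]

end Um

theorem SInd_eq_Ind_of_forall_indicator_eq {A : Type*} [Ring A] [Fintype A] {G H : Set A}
    {χ : A → ℂ} {g : A} (hG : G.Nonempty)
    (h : ∀ x ∈ G, ∀ y ∈ G, H.indicator χ (x * (g - 1) * y + 1) =
      H.indicator χ (Ring.inverse y * g * y)) :
    SInd G H χ g = Ind G H χ g := by
  have mem_setFinset : ∀ {z}, z ∈ setFinset G ↔ z ∈ G := by simp [setFinset]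
  have hcard : ((setFinset G).card : ℂ) ≠ 0 := by
    obtain ⟨z, hz⟩ := hG
    exact_mod_cast (Finset.card_pos.mpr ⟨z, mem_setFinset.mpr hz⟩).ne'
  simp only [SInd, Ind, ← Set.indicator_apply]
  rw [Finset.sum_comm]
  simp only [Finset.sum_congr rfl fun y hy => Finset.sum_congr rfl fun x hx =>
    h x (mem_setFinset.mp hx) y (mem_setFinset.mp hy), Finset.sum_const, nsmul_eq_mul,
    ← Finset.mul_sum]
  field_simp

theorem sind_eq_ind_Um_in_Un_general
    {n m : ℕ} (F : Type*) [Field F] [Fintype F] :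
    ∀ χ : Matrix (Fin n) (Fin n) F → ℂ, IsSuperclassFn (UmSub F n m) χ →
      ∀ g ∈ patternGroup F (fun i j : Fin n => i < j),
        SInd (patternGroup F (fun i j : Fin n => i < j)) (UmSub F n m) χ g =
          Ind (patternGroup F (fun i j : Fin n => i < j)) (UmSub F n m) χ g := by
  intro χ hχ g _
  refine SInd_eq_Ind_of_forall_indicator_eq ⟨1, one_mem_patternGroup _⟩ fun x hx y hy => ?_
  have hy_unit := isUnit_of_mem_patternGroup_lt hy
  calc (UmSub F n m).indicator χ (x * (g - 1) * y + 1)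
      = (UmSub F n m).indicator χ ((x * y) * (Ring.inverse y * (g - 1) * y) + 1) := by
        rw [show (x * y) * (Ring.inverse y * (g - 1) * y) = x * (y * Ring.inverse y) * (g - 1) * y
          by noncomm_ring, Ring.mul_inverse_cancel y hy_unit, mul_one]
    _ = (UmSub F n m).indicator χ (Ring.inverse y * (g - 1) * y + 1) :=
        hχ.indicator_mul_add_one (mul_mem_patternGroup_lt hx hy) _
    _ = (UmSub F n m).indicator χ (Ring.inverse y * g * y) := by
        rw [mul_sub, mul_one, sub_mul, Ring.inverse_mul_cancel y hy_unit, sub_add_cancel]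

theorem sind_eq_ind_Um_in_Un
    {n m : ℕ} (F : Type*) [Field F] [Fintype F]
    (hm : 1 ≤ m) (hmn : m ≤ n) :
    ∀ χ : Matrix (Fin n) (Fin n) F → ℂ, IsSuperclassFn (UmSub F n m) χ →
      ∀ g ∈ patternGroup F (fun i j : Fin n => i < j),
        SInd (patternGroup F (fun i j : Fin n => i < j)) (UmSub F n m) χ g =
          Ind (patternGroup F (fun i j : Fin n => i < j)) (UmSub F n m) χ g :=
  sind_eq_ind_Um_in_Un_general F
end
end

section
/- Fix n ≥ 1 and for 0 ≤ m ≤ n let U_{(m)} = {u ∈ U_n : u_{1j} = 0 for 2 ≤ j ≤ m}. Then each U_{(m)} is a pattern subgroup of U_n, there is a chain U_{(n)} ◁ U_{(n−1)} ◁ ⋯ ◁ U_{(1)} ◁ U_{(0)} = U_n of normal subgroups with U_{(n)} isomorphic to U_{n−1}, and for every pair 0 ≤ k ≤ m ≤ n one has SInd_{U_{(m)}}^{U_{(k)}}(χ) = Ind_{U_{(m)}}^{U_{(k)}}(χ) for all superclass functions χ of U_{(m)}. -/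
/-!
STATEMENT 11: Fix n ≥ 1 and for 0 ≤ m ≤ n let
U_{(m)} = {u ∈ U_n : u_{1j} = 0 for 2 ≤ j ≤ m}.  Then each U_{(m)} is a pattern
subgroup of U_n, there is a chain U_{(n)} ◁ U_{(n−1)} ◁ ⋯ ◁ U_{(1)} ◁ U_{(0)} = U_n of
normal subgroups with U_{(n)} isomorphic to U_{n−1}, and for every 0 ≤ k ≤ m ≤ n one
has SInd_{U_{(m)}}^{U_{(k)}}(χ) = Ind_{U_{(m)}}^{U_{(k)}}(χ) for all superclass
functions χ of U_{(m)}.  (0-based indices: 1-based `2 ≤ j ≤ m` reads `j ≠ 0 ∧ (j:ℕ)+1 ≤ m`.)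
-/
open scoped Classical

noncomputable section

/-- The interpolating group `U_{(m)} ⊆ U_n`. -/
def Uparen (F : Type*) [Field F] (n m : ℕ) : Set (Matrix (Fin n) (Fin n) F) :=
  {u | ((∀ i, u i i = 1) ∧ ∀ i j, i ≠ j → u i j ≠ 0 → i < j) ∧
    ∀ i j : Fin n, (i : ℕ) = 0 → (j : ℕ) ≠ 0 → (j : ℕ) + 1 ≤ m → u i j = 0}

namespace UparenAux

variable {F : Type*} [Field F] {n : ℕ}

def npat (F : Type*) [Field F] (n m : ℕ) : Set (Matrix (Fin n) (Fin n) F) :=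
  {a | ∀ i j : Fin n, a i j ≠ 0 → i < j ∧ ¬((i : ℕ) = 0 ∧ (j : ℕ) + 1 ≤ m)}

lemma npat_mono {m m' : ℕ} (h : m' ≤ m) : npat F n m ⊆ npat F n m' := by
  intro a ha i j hij
  refine ⟨(ha i j hij).1, fun hw => (ha i j hij).2 ⟨hw.1, hw.2.trans h⟩⟩

lemma zero_mem_npat {m : ℕ} : (0 : Matrix (Fin n) (Fin n) F) ∈ npat F n m := by
  intro i j hij; simp at hij

lemma neg_mem_npat {m : ℕ} {a : Matrix (Fin n) (Fin n) F} (ha : a ∈ npat F n m) :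
    -a ∈ npat F n m := by
  intro i j hij
  exact ha i j (by simpa using hij)

lemma add_mem_npat {m : ℕ} {a b : Matrix (Fin n) (Fin n) F} (ha : a ∈ npat F n m)
    (hb : b ∈ npat F n m) : a + b ∈ npat F n m := by
  intro i j hij
  by_cases h : a i j ≠ 0
  · exact ha i j h
  · push_neg at h
    refine hb i j ?_
    intro hb0
    apply hij
    simp [Matrix.add_apply, h, hb0]

lemma sum_mem_npat {m : ℕ} {ι : Type*} {s : Finset ι} {f : ι → Matrix (Fin n) (Fin n) F}
    (hf : ∀ i ∈ s, f i ∈ npat F n m) : (∑ i ∈ s, f i) ∈ npat F n m :=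
  Finset.sum_induction f (· ∈ npat F n m) (fun _ _ => add_mem_npat) zero_mem_npat hf

lemma mem_uparen_iff {m : ℕ} {u : Matrix (Fin n) (Fin n) F} :
    u ∈ Uparen F n m ↔ u - 1 ∈ npat F n m := by
  constructor
  · rintro ⟨⟨hd, ht⟩, hw⟩ i j hij
    by_cases hij' : i = j
    · subst hij'; simp [Matrix.sub_apply, hd i, Matrix.one_apply_eq] at hij
    · have hij0 : u i j ≠ 0 := by
        simpa [Matrix.sub_apply, Matrix.one_apply_ne hij'] using hij
      have hlt := ht i j hij' hij0
      refine ⟨hlt, ?_⟩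
      rintro ⟨hi0, hjm⟩
      have hj0 : (j : ℕ) ≠ 0 := by
        have := hlt; rw [Fin.lt_def] at this; omega
      exact hij0 (hw i j hi0 hj0 hjm)
  · intro h
    refine ⟨⟨fun i => ?_, fun i j hij hij0 => ?_⟩, fun i j hi0 hj0 hjm => ?_⟩
    · have : (u - 1) i i = 0 := by
        by_contra hc
        exact absurd (h i i hc).1 (lt_irrefl i)
      have h1 : (1 : Matrix (Fin n) (Fin n) F) i i = 1 := Matrix.one_apply_eq i
      simp [Matrix.sub_apply, h1] at this
      linear_combination (this : u i i - 1 = 0)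
    · have : (u - 1) i j ≠ 0 := by
        simpa [Matrix.sub_apply, Matrix.one_apply_ne hij] using hij0
      exact (h i j this).1
    · by_contra hc
      have hij : i ≠ j := fun he => hj0 (he ▸ hi0)
      have : (u - 1) i j ≠ 0 := by
        simpa [Matrix.sub_apply, Matrix.one_apply_ne hij] using hc
      exact (h i j this).2 ⟨hi0, hjm⟩

lemma uparen_mono {m m' : ℕ} (h : m' ≤ m) : Uparen F n m ⊆ Uparen F n m' := by
  intro u hu
  exact mem_uparen_iff.mpr (npat_mono h (mem_uparen_iff.mp hu))

lemma one_mem_uparen {m : ℕ} : (1 : Matrix (Fin n) (Fin n) F) ∈ Uparen F n m :=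
  mem_uparen_iff.mpr (by simpa using (zero_mem_npat (F := F) (n := n) (m := m)))

lemma npat_mul_npat0 {k : ℕ} {a b : Matrix (Fin n) (Fin n) F} (ha : a ∈ npat F n k)
    (hb : b ∈ npat F n 0) : a * b ∈ npat F n k := by
  intro i j hij
  rw [Matrix.mul_apply] at hij
  obtain ⟨l, -, hl⟩ := Finset.exists_ne_zero_of_sum_ne_zero hij
  have ha' := ha i l (left_ne_zero_of_mul hl)
  have hb' := hb l j (right_ne_zero_of_mul hl)
  have h1 := ha'.1; have h2 := hb'.1
  rw [Fin.lt_def] at h1 h2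
  refine ⟨by rw [Fin.lt_def]; omega, ?_⟩
  rintro ⟨hi0, hjk⟩
  have := ha'.2
  omega

lemma npat_mul_npat {k m : ℕ} (hmk : m ≤ k + 1) {a b : Matrix (Fin n) (Fin n) F}
    (ha : a ∈ npat F n k) (hb : b ∈ npat F n m) : a * b ∈ npat F n m := by
  intro i j hij
  rw [Matrix.mul_apply] at hij
  obtain ⟨l, -, hl⟩ := Finset.exists_ne_zero_of_sum_ne_zero hij
  have ha' := ha i l (left_ne_zero_of_mul hl)
  have hb' := hb l j (right_ne_zero_of_mul hl)
  have h1 := ha'.1; have h2 := hb'.1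
  rw [Fin.lt_def] at h1 h2
  refine ⟨by rw [Fin.lt_def]; omega, ?_⟩
  rintro ⟨hi0, hjm⟩
  have := ha'.2
  omega

lemma npat_mul_uparen {m : ℕ} {a v : Matrix (Fin n) (Fin n) F} (ha : a ∈ npat F n m)
    (hv : v ∈ Uparen F n 0) : a * v ∈ npat F n m := by
  have h : a * v = a + a * (v - 1) := by noncomm_ring
  rw [h]
  exact add_mem_npat ha (npat_mul_npat0 ha (mem_uparen_iff.mp hv))

lemma uparen_mul {m : ℕ} {u v : Matrix (Fin n) (Fin n) F} (hu : u ∈ Uparen F n m)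
    (hv : v ∈ Uparen F n m) : u * v ∈ Uparen F n m := by
  rw [mem_uparen_iff]
  have h : u * v - 1 = (u - 1) * v + (v - 1) := by noncomm_ring
  rw [h]
  exact add_mem_npat
    (npat_mul_uparen (mem_uparen_iff.mp hu) (uparen_mono (Nat.zero_le m) hv))
    (mem_uparen_iff.mp hv)

lemma npat_pow_le {a : Matrix (Fin n) (Fin n) F} (ha : a ∈ npat F n 0) :
    ∀ (p : ℕ) (i j : Fin n), (a ^ p) i j ≠ 0 → (i : ℕ) + p ≤ (j : ℕ) := by
  intro p
  induction p with
  | zero =>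
    intro i j hij
    rw [pow_zero] at hij
    have : i = j := by
      by_contra hc; exact hij (Matrix.one_apply_ne hc)
    simp [this]
  | succ p ih =>
    intro i j hij
    rw [pow_succ, Matrix.mul_apply] at hij
    obtain ⟨l, -, hl⟩ := Finset.exists_ne_zero_of_sum_ne_zero hij
    have h1 := ih i l (left_ne_zero_of_mul hl)
    have h2 := (ha l j (right_ne_zero_of_mul hl)).1
    rw [Fin.lt_def] at h2
    omega

lemma npat_nilpotent {a : Matrix (Fin n) (Fin n) F} (ha : a ∈ npat F n 0) : a ^ n = 0 := by
  ext i j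
  by_contra hc
  have := npat_pow_le ha n i j hc
  have := j.isLt
  omega

lemma npat_pow_mem {m : ℕ} {a : Matrix (Fin n) (Fin n) F} (ha : a ∈ npat F n m) :
    ∀ p, 1 ≤ p → a ^ p ∈ npat F n m := by
  intro p hp
  induction p with
  | zero => omega
  | succ p ih =>
    rcases Nat.eq_or_lt_of_le hp with h | h
    · simpa [← h] using ha
    · have hp1 : 1 ≤ p := by omega
      rw [pow_succ]
      exact npat_mul_npat0 (ih hp1) (npat_mono (Nat.zero_le m) ha)

lemma exists_inv (hn : 1 ≤ n) {m : ℕ} {u : Matrix (Fin n) (Fin n) F} (hu : u ∈ Uparen F n m) :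
    ∃ v ∈ Uparen F n m, u * v = 1 ∧ v * u = 1 := by
  set x : Matrix (Fin n) (Fin n) F := 1 - u with hx
  have hxm : x ∈ npat F n m := by
    have h : x = -(u - 1) := by rw [hx]; noncomm_ring
    rw [h]
    exact neg_mem_npat (mem_uparen_iff.mp hu)
  have hxn : x ^ n = 0 := npat_nilpotent (npat_mono (Nat.zero_le m) hxm)
  set v : Matrix (Fin n) (Fin n) F := ∑ i ∈ Finset.range n, x ^ i with hv
  have hxu : x - 1 = -u := by rw [hx]; noncomm_ring
  have huv : u * v = 1 := by
    have h := mul_geom_sum x n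
    rw [← hv, hxn, hxu] at h
    have h2 : -(u * v) = -1 := by rw [← neg_mul]; rw [h]; noncomm_ring
    exact neg_injective h2
  have hvu : v * u = 1 := by
    have h := geom_sum_mul x n
    rw [← hv, hxn, hxu] at h
    have h2 : -(v * u) = -1 := by rw [← mul_neg]; rw [h]; noncomm_ring
    exact neg_injective h2
  refine ⟨v, ?_, huv, hvu⟩
  rw [mem_uparen_iff]
  have hsplit : ∑ i ∈ Finset.range n, x ^ i = x ^ 0 + ∑ i ∈ Finset.Ico 1 n, x ^ i := by
    rw [Finset.range_eq_Ico, Finset.sum_eq_sum_Ico_succ_bot (by omega : 0 < n)]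
  have hveq : v - 1 = ∑ i ∈ Finset.Ico 1 n, x ^ i := by
    rw [hv, hsplit, pow_zero]; noncomm_ring
  rw [hveq]
  exact sum_mem_npat fun i hi => npat_pow_mem hxm i (Finset.mem_Ico.mp hi).1

lemma uparen_conj {m : ℕ} (hm : 1 ≤ m) {x x' h : Matrix (Fin n) (Fin n) F}
    (hx : x ∈ Uparen F n (m - 1)) (hx' : x' ∈ Uparen F n (m - 1)) (hxx' : x * x' = 1)
    (hh : h ∈ Uparen F n m) : x * h * x' ∈ Uparen F n m := by
  rw [mem_uparen_iff]
  have key : x * h * x' = 1 + (x * (h - 1)) * x' := by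
    have : x * h * x' = x * (h - 1) * x' + x * x' := by noncomm_ring
    rw [this, hxx']; noncomm_ring
  have h1 : x * (h - 1) = (h - 1) + (x - 1) * (h - 1) := by noncomm_ring
  have h2 : x * (h - 1) ∈ npat F n m := by
    rw [h1]
    exact add_mem_npat (mem_uparen_iff.mp hh)
      (npat_mul_npat (by omega) (mem_uparen_iff.mp hx) (mem_uparen_iff.mp hh))
  have h3 : (x * (h - 1)) * x' ∈ npat F n m :=
    npat_mul_uparen h2 (uparen_mono (Nat.zero_le _) hx')
  rw [key]
  simpa using h3

def srow [NeZero n] (y : Matrix (Fin n) (Fin n) F) (m : ℕ) (j : Fin n) : F :=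
  if (j : ℕ) ≠ 0 ∧ (j : ℕ) + 1 ≤ m then
    y 0 j - ∑ l : Fin n, if h : l < j then srow y m l * y l j else 0
  else 0
termination_by (j : ℕ)
decreasing_by exact h

lemma srow_eq [NeZero n] (y : Matrix (Fin n) (Fin n) F) (m : ℕ) (j : Fin n) :
    srow y m j = if (j : ℕ) ≠ 0 ∧ (j : ℕ) + 1 ≤ m then
      y 0 j - ∑ l : Fin n, if l < j then srow y m l * y l j else 0
    else 0 := by
  rw [srow]
  simp only [dite_eq_ite]

lemma key_term (hn : 1 ≤ n) {k m : ℕ} {χ : Matrix (Fin n) (Fin n) F → ℂ}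
    (hχ : IsSuperclassFn (Uparen F n m) χ) {u y : Matrix (Fin n) (Fin n) F}
    (hu : u ∈ Uparen F n k) (hy : y ∈ Uparen F n k) :
    (if (u - 1) * y + 1 ∈ Uparen F n m then χ ((u - 1) * y + 1) else 0) =
      (if u ∈ Uparen F n m then χ u else 0) := by
  haveI : NeZero n := ⟨by omega⟩
  set e : Matrix (Fin n) (Fin n) F := fun i j => if (i : ℕ) = 0 then srow y m j else 0 with he
  set h : Matrix (Fin n) (Fin n) F := y - e * y with hh
  -- srow is supported on the window
  have hsupp : ∀ j : Fin n, srow y m j ≠ 0 → (j : ℕ) ≠ 0 ∧ (j : ℕ) + 1 ≤ m := by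
    intro j hj
    by_contra hc
    rw [srow_eq, if_neg hc] at hj
    exact hj rfl
  -- (u - 1) has zero 0-th column
  have hcol : ∀ i : Fin n, (u - 1) i 0 = 0 := by
    intro i
    by_cases hi : i = 0
    · subst hi
      simp [Matrix.sub_apply, Matrix.one_apply_eq, hu.1.1 0]
    · have : u i 0 = 0 := by
        by_contra hc
        have := hu.1.2 i 0 hi hc
        rw [Fin.lt_def] at this
        simp at this
      simp [Matrix.sub_apply, Matrix.one_apply_ne hi, this]
  have hF1 : (u - 1) * e = 0 := by
    ext i j
    rw [Matrix.mul_apply]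
    have : ∀ l : Fin n, (u - 1) i l * e l j = 0 := by
      intro l
      by_cases hl : (l : ℕ) = 0
      · have hl0 : l = 0 := by
          ext; simpa using hl
        rw [hl0, hcol i, zero_mul]
      · have : e l j = 0 := by rw [he]; simp [hl]
        rw [this, mul_zero]
    simp only [Matrix.zero_apply]
    exact Finset.sum_eq_zero fun l _ => this l
  have hF2 : (u - 1) * h = (u - 1) * y := by
    rw [hh, mul_sub, ← mul_assoc, hF1, zero_mul, sub_zero]
  -- entries of e * y
  have hey : ∀ i j : Fin n, (e * y) i j =
      if (i : ℕ) = 0 then ∑ l : Fin n, srow y m l * y l j else 0 := by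
    intro i j
    rw [Matrix.mul_apply]
    by_cases hi : (i : ℕ) = 0
    · rw [if_pos hi]
      refine Finset.sum_congr rfl fun l _ => ?_
      rw [he]; simp [hi]
    · rw [if_neg hi]
      refine Finset.sum_eq_zero fun l _ => ?_
      rw [he]; simp [hi]
  have hsum : ∀ j : Fin n, ∑ l : Fin n, srow y m l * y l j =
      srow y m j * y j j + ∑ l : Fin n, (if l < j then srow y m l * y l j else 0) := by
    intro j
    have hterm : ∀ l : Fin n, srow y m l * y l j =
        (if l < j then srow y m l * y l j else 0) + (if l = j then srow y m j * y j j else 0) := by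
      intro l
      rcases lt_trichotomy l j with hl | hl | hl
      · simp [hl, Fin.ne_of_lt hl]
      · subst hl; simp [lt_irrefl]
      · have h1 : ¬ l < j := not_lt_of_gt hl
        have h2 : l ≠ j := ne_of_gt hl
        have h3 : y l j = 0 := by
          by_contra hc
          exact absurd (hy.1.2 l j h2 hc) h1
        simp [h1, h2, h3]
    rw [Finset.sum_congr rfl fun l _ => hterm l, Finset.sum_add_distrib,
      Finset.sum_ite_eq' Finset.univ j fun _ => srow y m j * y j j]
    simp [add_comm]
  have hhm : h ∈ Uparen F n m := by
    refine ⟨⟨fun i => ?_, fun i j hij hij0 => ?_⟩, fun i j hi0 hj0 hjm => ?_⟩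
    · by_cases hi : (i : ℕ) = 0
      · have hi0 : i = 0 := by ext; simpa using hi
        subst hi0
        have hz : ∑ l : Fin n, srow y m l * y l 0 = 0 := by
          refine Finset.sum_eq_zero fun l _ => ?_
          by_cases hl : (l : ℕ) = 0
          · have : srow y m l = 0 := by
              by_contra hc; exact (hsupp l hc).1 hl
            rw [this, zero_mul]
          · have : y l 0 = 0 := by
              by_contra hc
              have hne : l ≠ (0 : Fin n) := by
                intro hcc; apply hl; rw [hcc]; simp
              have := hy.1.2 l 0 hne hc
              rw [Fin.lt_def] at this
              simp at this
            rw [this, mul_zero]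
        rw [hh]
        simp [Matrix.sub_apply, hey, hz, hy.1.1 0]
      · rw [hh]
        simp [Matrix.sub_apply, hey, hi, hy.1.1 i]
    · by_cases hi : (i : ℕ) = 0
      · have hj : (j : ℕ) ≠ 0 := by
          intro hc
          exact hij (by ext; rw [hi, hc])
        rw [Fin.lt_def]; omega
      · have : h i j = y i j := by
          rw [hh]; simp [Matrix.sub_apply, hey, hi]
        rw [this] at hij0
        exact hy.1.2 i j hij hij0
    · have hi : i = 0 := by ext; simpa using hi0
      subst hi
      have hsr : srow y m j = y 0 j - ∑ l : Fin n, (if l < j then srow y m l * y l j else 0) := by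
        rw [srow_eq, if_pos ⟨hj0, hjm⟩]
      rw [hh]
      simp only [Matrix.sub_apply, hey]
      rw [if_pos (by simp), hsum j, hy.1.1 j, mul_one, hsr]
      ring
  by_cases hum : u ∈ Uparen F n m
  · have hnv : (u - 1) * h ∈ npat F n m :=
      npat_mul_uparen (mem_uparen_iff.mp hum) (uparen_mono (Nat.zero_le m) hhm)
    have hv : (u - 1) * h + 1 ∈ Uparen F n m := by
      rw [mem_uparen_iff]
      simpa using hnv
    have hval : χ u = χ ((u - 1) * h + 1) := by
      refine hχ u hum _ hv ⟨1, one_mem_uparen, h, hhm, ?_⟩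
      noncomm_ring
    rw [← hF2]
    rw [if_pos hv, if_pos hum, hval]
  · have hnotin : (u - 1) * y + 1 ∉ Uparen F n m := by
      intro hcon
      rw [← hF2] at hcon
      have h1 : (u - 1) * h ∈ npat F n m := by
        have := mem_uparen_iff.mp hcon
        simpa using this
      obtain ⟨h', hh', hi1, hi2⟩ := exists_inv hn hhm
      have h2 : u - 1 = ((u - 1) * h) * h' := by
        rw [mul_assoc, hi1, mul_one]
      have h3 : u - 1 ∈ npat F n m := by
        rw [h2]
        exact npat_mul_uparen h1 (uparen_mono (Nat.zero_le m) hh')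
      exact hum (mem_uparen_iff.mpr h3)
    rw [if_neg hnotin, if_neg hum]

lemma ring_inverse_spec (hn : 1 ≤ n) {m : ℕ} {z : Matrix (Fin n) (Fin n) F}
    (hz : z ∈ Uparen F n m) :
    Ring.inverse z ∈ Uparen F n m ∧ z * Ring.inverse z = 1 ∧ Ring.inverse z * z = 1 ∧
      Ring.inverse (Ring.inverse z) = z := by
  obtain ⟨v, hv, h1, h2⟩ := exists_inv hn hz
  have e1 : Ring.inverse z = v := Ring.inverse_unit ⟨z, v, h1, h2⟩
  have e2 : Ring.inverse v = z := Ring.inverse_unit ⟨v, z, h2, h1⟩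
  rw [e1]
  exact ⟨hv, h1, h2, e2⟩

lemma sind_eq_ind (hn : 1 ≤ n) [Fintype F] {k m : ℕ} (hkm : k ≤ m)
    {χ : Matrix (Fin n) (Fin n) F → ℂ} (hχ : IsSuperclassFn (Uparen F n m) χ)
    {g : Matrix (Fin n) (Fin n) F} (hg : g ∈ Uparen F n k) :
    SInd (Uparen F n k) (Uparen F n m) χ g = Ind (Uparen F n k) (Uparen F n m) χ g := by
  set G := Uparen F n k with hG
  set H := Uparen F n m with hH
  have hmem : ∀ z : Matrix (Fin n) (Fin n) F, z ∈ setFinset G ↔ z ∈ G := by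
    intro z; simp [setFinset]
  have hone : (1 : Matrix (Fin n) (Fin n) F) ∈ setFinset G := (hmem 1).mpr one_mem_uparen
  have hcardpos : 0 < (setFinset G).card := Finset.card_pos.mpr ⟨1, hone⟩
  have hcard : ((setFinset G).card : ℂ) ≠ 0 := Nat.cast_ne_zero.mpr (by omega)
  have inner : ∀ x ∈ setFinset G,
      (∑ y ∈ setFinset G, if x * (g - 1) * y + 1 ∈ H then χ (x * (g - 1) * y + 1) else 0)
        = ((setFinset G).card : ℂ) *
            (if x * g * Ring.inverse x ∈ H then χ (x * g * Ring.inverse x) else 0) := by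
    intro x hx
    have hxG : x ∈ G := (hmem x).mp hx
    obtain ⟨hxi, hx1, hx2, -⟩ := ring_inverse_spec hn hxG
    set u := x * g * Ring.inverse x with hu
    have huG : u ∈ G := uparen_mul (uparen_mul hxG hg) hxi
    have hrw : ∀ y : Matrix (Fin n) (Fin n) F, x * (g - 1) * y = (u - 1) * (x * y) := by
      intro y
      have h0 : (x * g * Ring.inverse x - 1) * (x * y)
          = x * g * (Ring.inverse x * x) * y - x * y := by noncomm_ring
      rw [hu, h0, hx2, mul_one]
      noncomm_ring
    calc (∑ y ∈ setFinset G, if x * (g - 1) * y + 1 ∈ H then χ (x * (g - 1) * y + 1) else 0)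
        = ∑ y ∈ setFinset G, (if (u - 1) * (x * y) + 1 ∈ H then χ ((u - 1) * (x * y) + 1) else 0) := by
          refine Finset.sum_congr rfl fun y _ => ?_
          rw [hrw y]
      _ = ∑ z ∈ setFinset G, (if (u - 1) * z + 1 ∈ H then χ ((u - 1) * z + 1) else 0) := by
          refine Finset.sum_nbij' (fun y => x * y) (fun z => Ring.inverse x * z)
            (fun y hy => (hmem _).mpr (uparen_mul hxG ((hmem _).mp hy)))
            (fun z hz => (hmem _).mpr (uparen_mul hxi ((hmem _).mp hz)))
            (fun y _ => show Ring.inverse x * (x * y) = y by rw [← mul_assoc, hx2, one_mul])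
            (fun z _ => show x * (Ring.inverse x * z) = z by rw [← mul_assoc, hx1, one_mul])
            (fun y _ => rfl)
      _ = ∑ _z ∈ setFinset G, (if u ∈ H then χ u else 0) := by
          refine Finset.sum_congr rfl fun z hz => ?_
          exact key_term hn hχ huG ((hmem z).mp hz)
      _ = ((setFinset G).card : ℂ) * (if u ∈ H then χ u else 0) := by
          rw [Finset.sum_const, nsmul_eq_mul]
  have rhs : (∑ y ∈ setFinset G,
        if Ring.inverse y * g * y ∈ H then χ (Ring.inverse y * g * y) else 0)
      = ∑ x ∈ setFinset G,
        (if x * g * Ring.inverse x ∈ H then χ (x * g * Ring.inverse x) else 0) := by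
    refine Finset.sum_nbij' (fun y => Ring.inverse y) (fun x => Ring.inverse x)
      (fun y hy => (hmem _).mpr (ring_inverse_spec hn ((hmem y).mp hy)).1)
      (fun x hx => (hmem _).mpr (ring_inverse_spec hn ((hmem x).mp hx)).1)
      (fun y hy => (ring_inverse_spec hn ((hmem y).mp hy)).2.2.2)
      (fun x hx => (ring_inverse_spec hn ((hmem x).mp hx)).2.2.2)
      (fun y hy => by rw [(ring_inverse_spec hn ((hmem y).mp hy)).2.2.2])
  rw [SInd, Ind, Finset.sum_congr rfl inner, ← Finset.mul_sum, rhs, mul_inv]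
  rw [show (((setFinset G).card : ℂ))⁻¹ * (((setFinset H).card : ℂ))⁻¹ *
      (((setFinset G).card : ℂ) * ∑ x ∈ setFinset G,
        (if x * g * Ring.inverse x ∈ H then χ (x * g * Ring.inverse x) else 0))
    = ((((setFinset G).card : ℂ))⁻¹ * ((setFinset G).card : ℂ)) * (((setFinset H).card : ℂ))⁻¹ *
      ∑ x ∈ setFinset G,
        (if x * g * Ring.inverse x ∈ H then χ (x * g * Ring.inverse x) else 0) from by ring]
  rw [inv_mul_cancel₀ hcard, one_mul]

def dn (n : ℕ) (i : Fin (n - 1)) : Fin n := ⟨(i : ℕ) + 1, by have := i.isLt; omega⟩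

def toSmall (F : Type*) [Field F] (n : ℕ) (u : Matrix (Fin n) (Fin n) F) :
    Matrix (Fin (n - 1)) (Fin (n - 1)) F := fun i j => u (dn n i) (dn n j)

def toBig (F : Type*) [Field F] (n : ℕ) (v : Matrix (Fin (n - 1)) (Fin (n - 1)) F) :
    Matrix (Fin n) (Fin n) F := fun i j =>
  if hi : (i : ℕ) = 0 then (if (j : ℕ) = 0 then 1 else 0)
  else if hj : (j : ℕ) = 0 then 0
  else v ⟨(i : ℕ) - 1, by have := i.isLt; omega⟩ ⟨(j : ℕ) - 1, by have := j.isLt; omega⟩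

lemma dn_lt_iff {i j : Fin (n - 1)} : dn n i < dn n j ↔ i < j := by
  rw [Fin.lt_def, Fin.lt_def, dn, dn]
  simp only []
  omega

lemma dn_ne {i j : Fin (n - 1)} (h : i ≠ j) : dn n i ≠ dn n j := by
  intro hc
  apply h
  have : ((dn n i : Fin n) : ℕ) = ((dn n j : Fin n) : ℕ) := by rw [hc]
  rw [dn, dn] at this
  exact Fin.ext (by simpa using this)

lemma toSmall_mem {u : Matrix (Fin n) (Fin n) F} (hu : u ∈ Uparen F n n) :
    toSmall F n u ∈ patternGroup F (fun i j : Fin (n - 1) => i < j) := by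
  refine ⟨fun i => hu.1.1 _, fun i j hij hij0 => ?_⟩
  have := hu.1.2 (dn n i) (dn n j) (dn_ne hij) hij0
  exact dn_lt_iff.mp this

lemma toBig_mem {v : Matrix (Fin (n - 1)) (Fin (n - 1)) F}
    (hv : v ∈ patternGroup F (fun i j : Fin (n - 1) => i < j)) :
    toBig F n v ∈ Uparen F n n := by
  refine ⟨⟨fun i => ?_, fun i j hij hij0 => ?_⟩, fun i j hi0 hj0 _ => ?_⟩
  · by_cases hi : (i : ℕ) = 0
    · rw [toBig]; simp [hi]
    · rw [toBig, dif_neg hi, dif_neg hi]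
      exact hv.1 _
  · rw [toBig] at hij0
    by_cases hi : (i : ℕ) = 0
    · rw [dif_pos hi] at hij0
      by_cases hj : (j : ℕ) = 0
      · exact absurd (Fin.ext (hi.trans hj.symm) : i = j) hij
      · simp [hj] at hij0
    · rw [dif_neg hi] at hij0
      by_cases hj : (j : ℕ) = 0
      · simp [hj] at hij0
      · rw [dif_neg hj] at hij0
        have hne : (⟨(i : ℕ) - 1, by have := i.isLt; omega⟩ : Fin (n - 1)) ≠
            ⟨(j : ℕ) - 1, by have := j.isLt; omega⟩ := by
          intro hc
          apply hij
          have := congrArg Fin.val hc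
          simp only [] at this
          exact Fin.ext (by omega)
        have := hv.2 _ _ hne hij0
        have hlt : (i : ℕ) - 1 < (j : ℕ) - 1 := this
        rw [Fin.lt_def]
        omega
  · rw [toBig, dif_pos hi0, if_neg hj0]

lemma toBig_toSmall {u : Matrix (Fin n) (Fin n) F} (hu : u ∈ Uparen F n n) :
    toBig F n (toSmall F n u) = u := by
  ext i j
  rw [toBig]
  by_cases hi : (i : ℕ) = 0
  · rw [dif_pos hi]
    by_cases hj : (j : ℕ) = 0
    · rw [if_pos hj]
      have : i = j := Fin.ext (hi.trans hj.symm)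
      rw [this, hu.1.1 j]
    · rw [if_neg hj, hu.2 i j hi hj (by have := j.isLt; omega)]
  · rw [dif_neg hi]
    by_cases hj : (j : ℕ) = 0
    · rw [dif_pos hj]
      symm
      by_contra hc
      have hij : i ≠ j := fun he => hi (he ▸ hj)
      have := hu.1.2 i j hij hc
      rw [Fin.lt_def] at this
      omega
    · rw [dif_neg hj, toSmall]
      congr 1 <;> · exact Fin.ext (by rw [dn]; simp; omega)

lemma toSmall_toBig (hn : 1 ≤ n) {v : Matrix (Fin (n - 1)) (Fin (n - 1)) F} :
    toSmall F n (toBig F n v) = v := by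
  ext i j
  rw [toSmall, toBig]
  have hi : ((dn n i : Fin n) : ℕ) ≠ 0 := by rw [dn]; simp
  have hj : ((dn n j : Fin n) : ℕ) ≠ 0 := by rw [dn]; simp
  rw [dif_neg hi, dif_neg hj]
  congr 1 <;> · exact Fin.ext (by rw [dn]; simp)

lemma toSmall_mul {a b c : Matrix (Fin n) (Fin n) F} (ha : a ∈ Uparen F n n)
    (hab : a * b = c) : toSmall F n a * toSmall F n b = toSmall F n c := by
  subst hab
  ext i j
  rw [Matrix.mul_apply, toSmall]
  show _ = (a * b) (dn n i) (dn n j)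
  rw [Matrix.mul_apply]
  have hEq : n - 1 + 1 = n := by
    have : 1 ≤ n := by have := (dn n i).isLt; by_contra hc; omega
    omega
  rw [← Fintype.sum_equiv (finCongr hEq)
    (fun M => a (dn n i) (finCongr hEq M) * b (finCongr hEq M) (dn n j))
    (fun L => a (dn n i) L * b L (dn n j)) (fun M => rfl)]
  rw [Fin.sum_univ_succ]
  have h0 : a (dn n i) (finCongr hEq 0) = 0 := by
    by_contra hc
    have hne : dn n i ≠ finCongr hEq 0 := by
      intro he
      have := congrArg Fin.val he
      rw [dn] at this
      simpa using this
    have := ha.1.2 _ _ hne hc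
    rw [Fin.lt_def] at this
    have : ((dn n i : Fin n) : ℕ) < ((finCongr hEq 0 : Fin n) : ℕ) := this
    rw [dn] at this
    simpa using this
  rw [h0, zero_mul, zero_add]
  refine Finset.sum_congr rfl fun l _ => ?_
  have : finCongr hEq l.succ = dn n l := by
    exact Fin.ext (by simp [dn])
  rw [this]
  rfl

end UparenAux

theorem Uparen_chain_and_sind_eq_ind
    {n : ℕ} (hn : 1 ≤ n) (F : Type*) [Field F] [Fintype F] :
    -- each U_{(m)} is a pattern subgroup of U_n
    (∀ m ≤ n, ∃ P : Fin n → Fin n → Prop, IsPatternOrder P ∧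
      Uparen F n m = patternGroup F P) ∧
    -- U_{(0)} = U_n
    (Uparen F n 0 = patternGroup F (fun i j : Fin n => i < j)) ∧
    -- the chain U_{(n)} ◁ U_{(n−1)} ◁ ⋯ ◁ U_{(1)} ◁ U_{(0)}
    (∀ m, 1 ≤ m → m ≤ n →
      Uparen F n m ⊆ Uparen F n (m - 1) ∧
      ∀ x ∈ Uparen F n (m - 1), ∀ h ∈ Uparen F n m, x * h * x⁻¹ ∈ Uparen F n m) ∧
    -- U_{(n)} is isomorphic (as a group) to U_{n−1}
    (∃ e : {u : Matrix (Fin n) (Fin n) F // u ∈ Uparen F n n} ≃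
           {v : Matrix (Fin (n - 1)) (Fin (n - 1)) F //
             v ∈ patternGroup F (fun i j : Fin (n - 1) => i < j)},
      ∀ a b c : {u : Matrix (Fin n) (Fin n) F // u ∈ Uparen F n n},
        (a : Matrix (Fin n) (Fin n) F) * b = c →
          (e a : Matrix (Fin (n - 1)) (Fin (n - 1)) F) * e b = e c) ∧
    -- superinduction is induction along the whole chain
    (∀ k m, k ≤ m → m ≤ n →
      ∀ χ : Matrix (Fin n) (Fin n) F → ℂ, IsSuperclassFn (Uparen F n m) χ →
        ∀ g ∈ Uparen F n k,
          SInd (Uparen F n k) (Uparen F n m) χ g =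
            Ind (Uparen F n k) (Uparen F n m) χ g) := by
  classical
  haveI : NeZero n := ⟨by omega⟩
  refine ⟨?_, ?_, ?_, ?_, ?_⟩
  · -- each U_{(m)} is a pattern subgroup
    intro m _
    refine ⟨fun i j => i < j ∧ ¬((i : ℕ) = 0 ∧ (j : ℕ) + 1 ≤ m),
      ⟨fun i j h => h.1, ?_⟩, ?_⟩
    · rintro i j l ⟨hij, hij2⟩ ⟨hjl, hjl2⟩
      refine ⟨lt_trans hij hjl, ?_⟩
      rintro ⟨hi0, hlm⟩
      rw [Fin.lt_def] at hij hjl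
      exact hij2 ⟨hi0, by omega⟩
    · ext u
      constructor
      · rintro ⟨⟨hd, ht⟩, hw⟩
        refine ⟨hd, fun i j hij hij0 => ⟨ht i j hij hij0, ?_⟩⟩
        rintro ⟨hi0, hjm⟩
        have hlt := ht i j hij hij0
        rw [Fin.lt_def] at hlt
        exact hij0 (hw i j hi0 (by omega) hjm)
      · rintro ⟨hd, hP⟩
        refine ⟨⟨hd, fun i j hij hij0 => (hP i j hij hij0).1⟩, fun i j hi0 hj0 hjm => ?_⟩
        by_contra hc
        have hij : i ≠ j := fun he => hj0 (he ▸ hi0)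
        exact (hP i j hij hc).2 ⟨hi0, hjm⟩
  · -- U_{(0)} = U_n
    ext u
    constructor
    · exact fun h => h.1
    · exact fun h => ⟨h, fun i j _ _ hjm => absurd hjm (by omega)⟩
  · -- the chain
    intro m h1 hm
    refine ⟨UparenAux.uparen_mono (by omega), fun x hx h hh => ?_⟩
    obtain ⟨x', hx', hxx', hx'x⟩ := UparenAux.exists_inv hn hx
    rw [Matrix.inv_eq_right_inv hxx']
    exact UparenAux.uparen_conj h1 hx hx' hxx' hh
  · -- the isomorphism with U_{n-1}
    refine ⟨{ toFun := fun u => ⟨UparenAux.toSmall F n u.1, UparenAux.toSmall_mem u.2⟩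
              invFun := fun v => ⟨UparenAux.toBig F n v.1, UparenAux.toBig_mem v.2⟩
              left_inv := fun u => Subtype.ext (UparenAux.toBig_toSmall u.2)
              right_inv := fun v => Subtype.ext (UparenAux.toSmall_toBig hn) }, ?_⟩
    intro a b c habc
    exact UparenAux.toSmall_mul a.2 habc
  · -- superinduction equals induction
    intro k m hkm _ χ hχ g hg
    exact UparenAux.sind_eq_ind hn hkm hχ hg
end
end
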